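/- arXiv:1808.02352 — 7 statements merged into one kernel-verified Lean document; each statement's English description precedes it below -/
import Mathlib

section
/- Let d < n be positive integers and write d ≡ r (mod 2) with r ∈ {0,1}. For every family 𝒜 of subsets of [n] = {1,…,n} such that the VC dimension of 𝒜 △ 𝒜 is at most d, one has |𝒜| ≤ 2^r · Σ_{i=0}^{⌊d/2⌋} C(n−r, i). -/
/-- A set `Y` is shattered by the family `F` if every subset of `Y`
is the trace of some member of `F` on `Y`. -/
def Shatters {α : Type*} [DecidableEq α] (F : Finset (Finset α)) (Y : Finset α) : Prop :=
  ∀ T ⊆ Y, ∃ S ∈ F, S ∩ Y = T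

/-- The VC dimension of a family: the largest cardinality of a shattered set. -/
noncomputable def vcDim {α : Type*} [DecidableEq α] (F : Finset (Finset α)) : ℕ :=
  sSup {m | ∃ Y : Finset α, Shatters F Y ∧ Y.card = m}

/-- `S₁ △ S₂ △ ⋯ △ S_k` for a `k`-tuple of sets. -/
def symmDiffAll {α : Type*} [DecidableEq α] {k : ℕ} (f : Fin k → Finset α) : Finset α :=
  (List.ofFn f).foldr symmDiff ∅

/-- The `k`-fold symmetric difference family `△𝒜^k`. -/
def symmDiffFam {α : Type*} [DecidableEq α] (k : ℕ) (A : Finset (Finset α)) :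
    Finset (Finset α) :=
  (Fintype.piFinset fun _ : Fin k => A).image symmDiffAll

/-- The family `𝒜₁ △ ⋯ △ 𝒜ₖ`. -/
def symmDiffFamMulti {α : Type*} [DecidableEq α] {k : ℕ} (A : Fin k → Finset (Finset α)) :
    Finset (Finset α) :=
  (Fintype.piFinset A).image symmDiffAll

/-- A family is `k`-wise `(n-d)`-union if any `k` of its members have union of size `≤ d`. -/
def KwiseUnion {α : Type*} [DecidableEq α] (k d : ℕ) (A : Finset (Finset α)) : Prop :=
  ∀ f : Fin k → Finset α, (∀ i, f i ∈ A) → (Finset.univ.sup f).card ≤ d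

/-- The `i`-compression of a family. -/
def compress {α : Type*} [DecidableEq α] (i : α) (A : Finset (Finset α)) :
    Finset (Finset α) :=
  A.image fun S => if S ∈ A ∧ S.erase i ∈ A then S else S.erase i

/-- The `(i,j)`-shift of a family. -/
def shiftIJ {α : Type*} [DecidableEq α] (i j : α) (A : Finset (Finset α)) :
    Finset (Finset α) :=
  A.image fun S => if i ∉ S ∧ j ∈ S ∧ insert i (S.erase j) ∉ A then insert i (S.erase j) else S

/-- `p(n,k,d)`: the maximum size of a `k`-wise `(n-d)`-union family on `[n]`. -/
noncomputable def pMax (n k d : ℕ) : ℕ :=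
  sSup {m | ∃ F : Finset (Finset (Fin n)), KwiseUnion k d F ∧ F.card = m}

/-!
Down-compressing `𝒜` creates no new set shattered by `𝒜 △ 𝒜`, because
`𝓓ₐ 𝒜 △ 𝓓ₐ 𝒜 ⊆ 𝓓ₐ (𝒜 △ 𝒜)` and compressions create no shattered sets; so we may assume that
`𝒜` is a down-set. Then for `S, T ∈ 𝒜` every `R ⊆ S ∪ T` is `(R ∩ S) △ (R \ S) ∈ 𝒜 △ 𝒜`,
hence `S ∪ T` is shattered and `|S ∪ T| ≤ d`. For such families the bound is Kleitman's: left
shifts preserve the union condition, and for a shifted family on `[m + 1]` the sets containing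
`m`, with `m` removed, have pairwise unions of size `≤ d - 2` (two free points below `m` can
replace it), which gives the Pascal-type recursion of the bound; at `n = d + 1` no set of `𝒜`
is the complement of another.
-/

section

open Finset
open scoped FinsetFamily symmDiff

namespace Down

variable {α : Type*} [DecidableEq α] {𝒜 : Finset (Finset α)} {s : Finset α} {a b : α}

theorem mem_compression' :
    s ∈ 𝓓 a 𝒜 ↔ (a ∈ s → s ∈ 𝒜 ∧ s.erase a ∈ 𝒜) ∧ (a ∉ s → s ∈ 𝒜 ∨ insert a s ∈ 𝒜) := by
  rw [mem_compression]
  by_cases ha : a ∈ s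
  · simp [ha, insert_eq_of_mem ha]
  · simp only [ha, erase_eq_of_notMem ha]
    tauto

theorem erase_mem_compression_of_forall_erase_mem (hb : ∀ t ∈ 𝒜, t.erase b ∈ 𝒜)
    (hs : s ∈ 𝓓 a 𝒜) : s.erase b ∈ 𝓓 a 𝒜 := by
  obtain rfl | hab := eq_or_ne a b
  · exact erase_mem_compression_of_mem_compression hs
  rw [mem_compression] at hs ⊢
  obtain ⟨hs, has⟩ | ⟨hs, has⟩ := hs
  · exact Or.inl ⟨hb s hs, erase_right_comm (s := s) ▸ hb _ has⟩
  · by_cases hbs : s.erase b ∈ 𝒜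
    · have ha : a ∉ s.erase b := fun h => hs (insert_eq_of_mem (mem_of_mem_erase h) ▸ has)
      exact Or.inl ⟨hbs, by rwa [erase_eq_of_notMem ha]⟩
    · exact Or.inr ⟨hbs, erase_insert_of_ne hab ▸ hb _ has⟩

lemma symmDiff_mem_of_mem_compression {U₁ U₂ : Finset α} (h₁ : U₁ ∈ 𝓓 a 𝒜) (h₂ : U₂ ∈ 𝓓 a 𝒜)
    (ha₁ : a ∈ U₁) (ha₂ : a ∉ U₂) :
    U₁ ∆ U₂ ∈ image₂ (· ∆ ·) 𝒜 𝒜 ∧ (U₁ ∆ U₂).erase a ∈ image₂ (· ∆ ·) 𝒜 𝒜 := by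
  rw [mem_compression'] at h₁ h₂
  obtain ⟨hU₁, hU₁a⟩ := h₁.1 ha₁
  obtain hU₂ | hU₂ := h₂.2 ha₂
  · refine ⟨mem_image₂_of_mem hU₁ hU₂, mem_image₂.2 ⟨_, hU₁a, _, hU₂, ?_⟩⟩
    ext x; by_cases hx : x = a <;> simp [mem_symmDiff, hx, ha₁, ha₂]
  · refine ⟨mem_image₂.2 ⟨_, hU₁a, _, hU₂, ?_⟩, mem_image₂.2 ⟨_, hU₁, _, hU₂, ?_⟩⟩ <;>
    · ext x; by_cases hx : x = a <;> simp [mem_symmDiff, hx, ha₁, ha₂]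

theorem image₂_symmDiff_compression_subset (a : α) (𝒜 : Finset (Finset α)) :
    image₂ (· ∆ ·) (𝓓 a 𝒜) (𝓓 a 𝒜) ⊆ 𝓓 a (image₂ (· ∆ ·) 𝒜 𝒜) := by
  simp only [subset_iff, mem_image₂]
  rintro _ ⟨U₁, h₁, U₂, h₂, rfl⟩
  rw [mem_compression']
  by_cases ha₁ : a ∈ U₁ <;> by_cases ha₂ : a ∈ U₂
  · have hU₁ := ((mem_compression'.1 h₁).1 ha₁).1
    have hU₂ := ((mem_compression'.1 h₂).1 ha₂).1
    exact ⟨fun h => by simp_all [mem_symmDiff], fun _ => Or.inl (mem_image₂_of_mem hU₁ hU₂)⟩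
  · exact ⟨fun _ => symmDiff_mem_of_mem_compression h₁ h₂ ha₁ ha₂,
      fun h => absurd (mem_symmDiff.2 (Or.inl ⟨ha₁, ha₂⟩)) h⟩
  · rw [symmDiff_comm]
    exact ⟨fun _ => symmDiff_mem_of_mem_compression h₂ h₁ ha₂ ha₁,
      fun h => absurd (mem_symmDiff.2 (Or.inl ⟨ha₂, ha₁⟩)) h⟩
  · refine ⟨fun h => by simp_all [mem_symmDiff], fun _ => ?_⟩
    obtain hU₁ | hU₁ := (mem_compression'.1 h₁).2 ha₁ <;>
    obtain hU₂ | hU₂ := (mem_compression'.1 h₂).2 ha₂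
    · exact Or.inl (mem_image₂_of_mem hU₁ hU₂)
    · refine Or.inr (mem_image₂.2 ⟨_, hU₁, _, hU₂, ?_⟩)
      ext x; by_cases hx : x = a <;> simp [mem_symmDiff, hx, ha₁, ha₂]
    · refine Or.inr (mem_image₂.2 ⟨_, hU₁, _, hU₂, ?_⟩)
      ext x; by_cases hx : x = a <;> simp [mem_symmDiff, hx, ha₁, ha₂]
    · refine Or.inl (mem_image₂.2 ⟨_, hU₁, _, hU₂, ?_⟩)
      ext x; by_cases hx : x = a <;> simp [mem_symmDiff, hx, ha₁, ha₂]

end Down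

section LowerSet

variable {α : Type*} [DecidableEq α] {A : Finset (Finset α)}

lemma sdiff_mem_of_forall_erase_mem (h : ∀ S ∈ A, ∀ a, S.erase a ∈ A) {S : Finset α}
    (hS : S ∈ A) (U : Finset α) : S \ U ∈ A := by
  induction U using Finset.induction_on with
  | empty => simpa
  | insert a U _ ih => rw [sdiff_insert]; exact h _ ih a

lemma isLowerSet_of_forall_erase_mem (h : ∀ S ∈ A, ∀ a, S.erase a ∈ A) :
    IsLowerSet (A : Set (Finset α)) := by
  intro S T hTS hS
  rw [mem_coe, ← Finset.sdiff_sdiff_eq_self hTS]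
  exact sdiff_mem_of_forall_erase_mem h hS _

theorem exists_isLowerSet_shatters_image₂_symmDiff [Fintype α] (A : Finset (Finset α)) :
    ∃ B : Finset (Finset α), #B = #A ∧ IsLowerSet (B : Set (Finset α)) ∧
      ∀ Y, (image₂ (· ∆ ·) B B).Shatters Y → (image₂ (· ∆ ·) A A).Shatters Y := by
  suffices ∀ s : Finset α, ∃ B : Finset (Finset α), #B = #A ∧
      (∀ a ∈ s, ∀ S ∈ B, S.erase a ∈ B) ∧
      ∀ Y, (image₂ (· ∆ ·) B B).Shatters Y → (image₂ (· ∆ ·) A A).Shatters Y by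
    obtain ⟨B, hcard, herase, hsh⟩ := this univ
    exact ⟨B, hcard, isLowerSet_of_forall_erase_mem fun S hS a => herase a (mem_univ a) S hS, hsh⟩
  intro s
  induction s using Finset.induction_on with
  | empty => exact ⟨A, rfl, by simp, fun _ => id⟩
  | insert a s _ ih =>
    obtain ⟨B, hcard, herase, hsh⟩ := ih
    refine ⟨𝓓 a B, (Down.card_compression a B).trans hcard, ?_, fun Y hY =>
      hsh Y (hY.mono_left (Down.image₂_symmDiff_compression_subset a B)).of_compression⟩
    intro b hb S hS
    obtain rfl | hb := mem_insert.1 hb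
    · exact Down.erase_mem_compression_of_mem_compression hS
    · exact Down.erase_mem_compression_of_forall_erase_mem (herase b hb) hS

theorem IsLowerSet.shatters_union_image₂_symmDiff (hA : IsLowerSet (A : Set (Finset α)))
    {S T : Finset α} (hS : S ∈ A) (hT : T ∈ A) : (image₂ (· ∆ ·) A A).Shatters (S ∪ T) :=
  shatters_of_forall_subset fun R hR => mem_image₂.2
    ⟨R ∩ S, hA inter_subset_right hS, R \ S, hA (sdiff_le_iff.2 hR) hT,
      (disjoint_sdiff_inter R S).symm.symmDiff_eq_sup.trans (sup_inf_sdiff R S)⟩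

end LowerSet

section UnionBounded

variable {α β : Type*} [DecidableEq α] [DecidableEq β] {A B : Finset (Finset α)} {d : ℕ}

/-- The `2`-wise `(n - d)`-union condition `KwiseUnion 2 d`, stated for pairs. -/
def UnionBounded (d : ℕ) (A : Finset (Finset α)) : Prop := ∀ S ∈ A, ∀ T ∈ A, #(S ∪ T) ≤ d

lemma UnionBounded.mono (h : UnionBounded d A) (hBA : B ⊆ A) : UnionBounded d B :=
  fun S hS T hT => h S (hBA hS) T (hBA hT)

lemma UnionBounded.map (h : UnionBounded d A) (f : α ↪ β) :
    UnionBounded d (A.map (mapEmbedding f).toEmbedding) := by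
  simp only [UnionBounded, mem_map, RelEmbedding.coe_toEmbedding, mapEmbedding_apply]
  rintro _ ⟨S, hS, rfl⟩ _ ⟨T, hT, rfl⟩
  rw [← map_union, card_map]
  exact h S hS T hT

end UnionBounded

section Shift

variable {α : Type*} [DecidableEq α] {A : Finset (Finset α)} {S T U : Finset α} {i j : α}
  {d : ℕ}

def shiftSet (i j : α) (A : Finset (Finset α)) (S : Finset α) : Finset α :=
  if i ∉ S ∧ j ∈ S ∧ insert i (S.erase j) ∉ A then insert i (S.erase j) else S

lemma shiftIJ_eq_image : shiftIJ i j A = A.image (shiftSet i j A) := rfl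

lemma shiftSet_injOn : Set.InjOn (shiftSet i j A) A := by
  intro S hS T hT hST
  unfold shiftSet at hST
  split_ifs at hST with h₁ h₂ h₂
  · have hS' : S.erase j = T.erase j := by
      rw [← erase_insert (fun h => h₁.1 (mem_of_mem_erase h)),
        ← erase_insert (fun h => h₂.1 (mem_of_mem_erase h)), hST]
    rw [← insert_erase h₁.2.1, ← insert_erase h₂.2.1, hS']
  · exact absurd (hST ▸ hT) h₁.2.2
  · exact absurd (hST ▸ hS) h₂.2.2
  · exact hST

lemma card_shiftIJ : #(shiftIJ i j A) = #A :=
  card_image_of_injOn shiftSet_injOn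

lemma shiftIJ_subset_powerset (hi : i ∈ U) (hA : A ⊆ U.powerset) :
    shiftIJ i j A ⊆ U.powerset := by
  intro _ hS'
  obtain ⟨S, hS, rfl⟩ := mem_image.1 hS'
  have hSU := mem_powerset.1 (hA hS)
  split_ifs
  · exact mem_powerset.2 (insert_subset hi ((erase_subset j S).trans hSU))
  · exact mem_powerset.2 hSU

lemma card_insert_erase_le (h : j ∈ S) : #(insert i (S.erase j)) ≤ #S :=
  (card_insert_le _ _).trans (by rw [card_erase_of_mem h, Nat.sub_add_cancel (card_pos.2 ⟨j, h⟩)])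

lemma UnionBounded.card_shiftSet_union_le (h : UnionBounded d A) (hS : S ∈ A) (hT : T ∈ A)
    (hjS : j ∈ S) : #(insert i (S.erase j) ∪ shiftSet i j A T) ≤ d := by
  have hjST : j ∈ S ∪ T := mem_union_left T hjS
  by_cases hjT : j ∈ T
  · unfold shiftSet
    split_ifs with hmoveT
    · calc #(insert i (S.erase j) ∪ insert i (T.erase j))
          = #(insert i ((S ∪ T).erase j)) := by
            congr 1; ext x; simp only [mem_union, mem_insert, mem_erase]; tauto
        _ ≤ d := (card_insert_erase_le hjST).trans (h S hS T hT)
    · by_cases hiT : i ∈ T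
      · refine le_trans (card_le_card ?_) (h S hS T hT)
        intro x hx
        simp only [mem_union, mem_insert, mem_erase] at hx ⊢
        rcases hx with (rfl | ⟨-, hx⟩) | hx <;> tauto
      · have hT' : insert i (T.erase j) ∈ A := by
          by_contra hT'; exact hmoveT ⟨hiT, hjT, hT'⟩
        calc #(insert i (S.erase j) ∪ T) = #(S ∪ insert i (T.erase j)) := by
              congr 1; ext x; simp only [mem_union, mem_insert, mem_erase]
              by_cases hx : x = j <;> simp_all; tauto
          _ ≤ d := h S hS _ hT'
  · have hfixT : shiftSet i j A T = T := if_neg fun hmoveT => hjT hmoveT.2.1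
    calc #(insert i (S.erase j) ∪ shiftSet i j A T) = #(insert i ((S ∪ T).erase j)) := by
          rw [hfixT]; congr 1; ext x; simp only [mem_union, mem_insert, mem_erase]
          by_cases hx : x = j <;> simp_all; tauto
      _ ≤ d := (card_insert_erase_le hjST).trans (h S hS T hT)

lemma UnionBounded.shiftIJ (h : UnionBounded d A) : UnionBounded d (shiftIJ i j A) := by
  simp only [UnionBounded, shiftIJ_eq_image, forall_mem_image]
  intro S hS T hT
  by_cases hmoveS : i ∉ S ∧ j ∈ S ∧ insert i (S.erase j) ∉ A
  · rw [shiftSet, if_pos hmoveS]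
    exact h.card_shiftSet_union_le hS hT hmoveS.2.1
  by_cases hmoveT : i ∉ T ∧ j ∈ T ∧ insert i (T.erase j) ∉ A
  · rw [union_comm, shiftSet, if_pos hmoveT]
    exact h.card_shiftSet_union_le hT hS hmoveT.2.1
  rw [shiftSet, shiftSet, if_neg hmoveS, if_neg hmoveT]
  exact h S hS T hT

end Shift

def IsShifted {α : Type*} [LinearOrder α] (A : Finset (Finset α)) : Prop :=
  ∀ S ∈ A, ∀ j ∈ S, ∀ i < j, i ∉ S → insert i (S.erase j) ∈ A

lemma IsShifted.insert_mem {α : Type*} [LinearOrder α] {A : Finset (Finset α)}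
    {S : Finset α} {i j : α} (hsh : IsShifted A) (hS : insert j S ∈ A) (hjS : j ∉ S)
    (hij : i < j) (hiS : i ∉ S) : insert i S ∈ A := by
  have := hsh _ hS j (mem_insert_self j S) i hij (by simp [hij.ne, hiS])
  rwa [erase_insert hjS] at this

lemma sum_insert_erase_lt {S : Finset ℕ} {i j : ℕ} (hij : i < j) (hiS : i ∉ S) (hjS : j ∈ S) :
    ∑ x ∈ insert i (S.erase j), x < ∑ x ∈ S, x := by
  rw [sum_insert fun h => hiS (mem_of_mem_erase h), ← sum_erase_add S _ hjS]
  omega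

lemma sum_sum_shiftIJ_lt {A : Finset (Finset ℕ)} {S : Finset ℕ} {i j : ℕ} (hij : i < j)
    (hS : S ∈ A) (hiS : i ∉ S) (hjS : j ∈ S) (hS' : insert i (S.erase j) ∉ A) :
    ∑ T ∈ shiftIJ i j A, ∑ x ∈ T, x < ∑ T ∈ A, ∑ x ∈ T, x := by
  rw [shiftIJ_eq_image, sum_image fun _ hT _ hT' h => shiftSet_injOn hT hT' h]
  refine sum_lt_sum (fun T _ => ?_) ⟨S, hS, ?_⟩
  · unfold shiftSet
    split_ifs with hmove
    · exact (sum_insert_erase_lt hij hmove.1 hmove.2.1).le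
    · exact le_rfl
  · rw [shiftSet, if_pos ⟨hiS, hjS, hS'⟩]
    exact sum_insert_erase_lt hij hiS hjS

theorem exists_isShifted {n d : ℕ} (A : Finset (Finset ℕ)) (hA : A ⊆ (range n).powerset)
    (h : UnionBounded d A) :
    ∃ B ⊆ (range n).powerset, IsShifted B ∧ #B = #A ∧ UnionBounded d B := by
  induction hw : ∑ S ∈ A, ∑ x ∈ S, x using Nat.strong_induction_on generalizing A with
  | _ w ih =>
  by_cases hsh : IsShifted A
  · exact ⟨A, hA, hsh, rfl, h⟩
  simp only [IsShifted, not_forall] at hsh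
  obtain ⟨S, hS, j, hjS, i, hij, hiS, hS'⟩ := hsh
  have hi : i ∈ range n := mem_range.2 (hij.trans (mem_range.1 (mem_powerset.1 (hA hS) hjS)))
  obtain ⟨B, hB, hshB, hcard, hUB⟩ := ih _ (hw ▸ sum_sum_shiftIJ_lt hij hS hiS hjS hS')
    (shiftIJ i j A) (shiftIJ_subset_powerset hi hA) h.shiftIJ rfl
  exact ⟨B, hB, hshB, hcard.trans card_shiftIJ, hUB⟩

/-- Kleitman's maximum size of a family of diameter `d` in `2^[n]`. -/
def kleitmanBound (n d : ℕ) : ℕ :=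
  2 ^ (d % 2) * ∑ i ∈ range (d / 2 + 1), (n - d % 2).choose i

lemma sum_range_choose_succ (m e : ℕ) :
    ∑ i ∈ range (e + 2), (m + 1).choose i =
      ∑ i ∈ range (e + 2), m.choose i + ∑ i ∈ range (e + 1), m.choose i := by
  rw [sum_range_succ' _ (e + 1), sum_range_succ' (m.choose ·) (e + 1)]
  simp only [Nat.choose_succ_succ, sum_add_distrib, Nat.choose_zero_right]
  ring

lemma kleitmanBound_succ_add_two {m d : ℕ} (h : d % 2 ≤ m) :
    kleitmanBound (m + 1) (d + 2) = kleitmanBound m (d + 2) + kleitmanBound m d := by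
  obtain ⟨k, hk⟩ : ∃ k, m = k + d % 2 := ⟨m - d % 2, by omega⟩
  simp only [kleitmanBound, Nat.add_mod_right, show (d + 2) / 2 = d / 2 + 1 by omega,
    show m + 1 - d % 2 = k + 1 by omega, show m - d % 2 = k by omega, sum_range_choose_succ]
  ring

lemma kleitmanBound_succ_self (d : ℕ) : kleitmanBound (d + 1) d = 2 ^ d := by
  obtain ⟨e, rfl | rfl⟩ := Nat.even_or_odd' d
  · simp [kleitmanBound, Nat.sum_range_choose_halfway, pow_mul]
  · simp [kleitmanBound, Nat.sum_range_choose_halfway, show (2 * e + 1) / 2 = e by omega,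
      pow_succ, pow_mul]
    ring

section Kleitman

variable {α : Type*} [DecidableEq α] {A : Finset (Finset α)}

theorem two_mul_card_le_of_union_ne {U : Finset α} (hA : A ⊆ U.powerset)
    (h : ∀ S ∈ A, ∀ T ∈ A, S ∪ T ≠ U) : 2 * #A ≤ 2 ^ #U := by
  have hcompl : Disjoint A (A.image (U \ ·)) := by
    refine disjoint_left.2 fun S hS hS' => ?_
    obtain ⟨T, hT, rfl⟩ := mem_image.1 hS'
    exact h _ hS T hT (sdiff_union_of_subset (mem_powerset.1 (hA hT)))
  have hinj : Set.InjOn (U \ ·) A := fun S hS T hT hST => by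
    rw [← Finset.sdiff_sdiff_eq_self (mem_powerset.1 (hA hS)),
      ← Finset.sdiff_sdiff_eq_self (mem_powerset.1 (hA hT))]
    exact congrArg (U \ ·) hST
  calc 2 * #A = #(A ∪ A.image (U \ ·)) := by
        rw [card_union_of_disjoint hcompl, card_image_of_injOn hinj, two_mul]
    _ ≤ #U.powerset := card_le_card (union_subset hA fun _ hS =>
        mem_powerset.2 (by obtain ⟨T, -, rfl⟩ := mem_image.1 hS; exact sdiff_subset))
    _ = 2 ^ #U := card_powerset U

lemma UnionBounded.card_le_one (h : UnionBounded 0 A) : #A ≤ 1 :=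
  Finset.card_le_one.2 fun S hS T hT => by
    have hST := card_eq_zero.1 (Nat.le_zero.1 (h S hS T hT))
    rw [union_eq_empty] at hST
    rw [hST.1, hST.2]

lemma UnionBounded.card_le_two (h : UnionBounded 1 A) : #A ≤ 2 := by
  suffices #(A.erase ∅) ≤ 1 by have := pred_card_le_card_erase (s := A) (a := ∅); omega
  refine Finset.card_le_one.2 fun S hS T hT => ?_
  have hS₀ := card_pos.2 (nonempty_iff_ne_empty.2 (mem_erase.1 hS).1)
  have hT₀ := card_pos.2 (nonempty_iff_ne_empty.2 (mem_erase.1 hT).1)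
  have hST := h S (mem_of_mem_erase hS) T (mem_of_mem_erase hT)
  exact (eq_of_subset_of_card_le subset_union_left (by omega)).trans
    (eq_of_subset_of_card_le subset_union_right (by omega)).symm

end Kleitman

section Subfamily

variable {A : Finset (Finset ℕ)} {S : Finset ℕ} {m d : ℕ}

lemma subset_range_of_subset_range_succ (hS : S ⊆ range (m + 1)) (hmS : m ∉ S) :
    S ⊆ range m :=
  (subset_insert_iff_of_notMem hmS).1 (range_add_one ▸ hS)

lemma nonMemberSubfamily_subset_powerset (hA : A ⊆ (range (m + 1)).powerset) :
    A.nonMemberSubfamily m ⊆ (range m).powerset := fun S hS => by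
  rw [mem_nonMemberSubfamily] at hS
  exact mem_powerset.2 (subset_range_of_subset_range_succ (mem_powerset.1 (hA hS.1)) hS.2)

lemma memberSubfamily_subset_powerset (hA : A ⊆ (range (m + 1)).powerset) :
    A.memberSubfamily m ⊆ (range m).powerset := fun S hS => by
  rw [mem_memberSubfamily] at hS
  exact mem_powerset.2 (subset_range_of_subset_range_succ
    ((subset_insert m S).trans (mem_powerset.1 (hA hS.1))) hS.2)

lemma IsShifted.nonMemberSubfamily (hA : A ⊆ (range (m + 1)).powerset) (hsh : IsShifted A) :
    IsShifted (A.nonMemberSubfamily m) := by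
  intro S hS j hjS i hij hiS
  have hjm : j < m := mem_range.1 (mem_powerset.1 (nonMemberSubfamily_subset_powerset hA hS) hjS)
  rw [mem_nonMemberSubfamily] at hS ⊢
  refine ⟨hsh S hS.1 j hjS i hij hiS, ?_⟩
  simp only [mem_insert, mem_erase, not_or, not_and]
  exact ⟨by omega, fun _ => hS.2⟩

lemma IsShifted.memberSubfamily (hA : A ⊆ (range (m + 1)).powerset) (hsh : IsShifted A) :
    IsShifted (A.memberSubfamily m) := by
  intro S hS j hjS i hij hiS
  have hjm : j < m := mem_range.1 (mem_powerset.1 (memberSubfamily_subset_powerset hA hS) hjS)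
  rw [mem_memberSubfamily] at hS ⊢
  have h := hsh _ hS.1 j (mem_insert_of_mem hjS) i hij (by simp [hiS]; omega)
  rw [erase_insert_of_ne (by omega), insert_comm] at h
  refine ⟨h, ?_⟩
  simp only [mem_insert, mem_erase, not_or, not_and]
  exact ⟨by omega, fun _ => hS.2⟩

lemma UnionBounded.memberSubfamily (hA : A ⊆ (range (m + 1)).powerset) (hsh : IsShifted A)
    (h : UnionBounded (d + 2) A) (hdm : d + 2 < m) : UnionBounded d (A.memberSubfamily m) := by
  intro S hS T hT
  have hSm := mem_powerset.1 (memberSubfamily_subset_powerset hA hS)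
  have hTm := mem_powerset.1 (memberSubfamily_subset_powerset hA hT)
  rw [mem_memberSubfamily] at hS hT
  have hST : #(S ∪ T) + 1 ≤ d + 2 := by
    have := h _ hS.1 _ hT.1
    rwa [← insert_union_distrib, card_insert_of_notMem (by simp [hS.2, hT.2])] at this
  have hfree : 1 < #(range m \ (S ∪ T)) := by
    rw [card_sdiff_of_subset (union_subset hSm hTm), card_range]; omega
  -- shifting `m` down to two distinct free points `x, y < m` adds both to `S ∪ T`
  obtain ⟨x, hx, y, hy, hxy⟩ := one_lt_card.1 hfree
  rw [mem_sdiff, mem_range, mem_union, not_or] at hx hy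
  have hxS := hsh.insert_mem hS.1 hS.2 hx.1 hx.2.1
  have hyT := hsh.insert_mem hT.1 hT.2 hy.1 hy.2.2
  have := h _ hxS _ hyT
  rw [insert_union, union_insert, card_insert_of_notMem (by simp [hxy, hx.2]),
    card_insert_of_notMem (by simp [hy.2])] at this
  omega

end Subfamily

theorem card_le_kleitmanBound_of_isShifted {n d : ℕ} {A : Finset (Finset ℕ)} (hdn : d < n)
    (hA : A ⊆ (range n).powerset) (hsh : IsShifted A) (h : UnionBounded d A) :
    #A ≤ kleitmanBound n d := by
  induction n generalizing d A with
  | zero => omega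
  | succ m ih =>
  obtain rfl | hdm := (Nat.lt_succ_iff.1 hdn).eq_or_lt
  · have := two_mul_card_le_of_union_ne hA fun S hS T hT hST => by
      have := h S hS T hT; rw [hST, card_range] at this; omega
    rw [kleitmanBound_succ_self, card_range, pow_succ] at *
    omega
  match d, h with
  | 0, h => simpa [kleitmanBound] using h.card_le_one
  | 1, h => simpa [kleitmanBound] using h.card_le_two
  | e + 2, h =>
    rw [← card_memberSubfamily_add_card_nonMemberSubfamily m, add_comm,
      kleitmanBound_succ_add_two (by omega)]
    exact add_le_add
      (ih hdm (nonMemberSubfamily_subset_powerset hA) (hsh.nonMemberSubfamily hA)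
        (h.mono (filter_subset _ _)))
      (ih (by omega) (memberSubfamily_subset_powerset hA) (hsh.memberSubfamily hA)
        (h.memberSubfamily hA hsh hdm))

theorem card_le_kleitmanBound {n d : ℕ} {A : Finset (Finset (Fin n))} (hdn : d < n)
    (h : UnionBounded d A) : #A ≤ kleitmanBound n d := by
  have hA : A.map (mapEmbedding Fin.valEmbedding).toEmbedding ⊆ (range n).powerset := by
    simp only [subset_iff, mem_map, RelEmbedding.coe_toEmbedding, mapEmbedding_apply,
      mem_powerset, forall_exists_index, and_imp]
    rintro _ S - rfl _ hx
    obtain ⟨x, -, rfl⟩ := mem_map.1 hx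
    exact mem_range.2 x.isLt
  obtain ⟨B, hB, hsh, hcard, hUB⟩ := exists_isShifted _ hA (h.map Fin.valEmbedding)
  rw [← card_map (mapEmbedding Fin.valEmbedding).toEmbedding, ← hcard]
  exact card_le_kleitmanBound_of_isShifted hdn hB hsh hUB

lemma card_le_of_vcDim_le {α : Type*} [DecidableEq α] [Fintype α] {F : Finset (Finset α)}
    {Y : Finset α} {d : ℕ} (hF : _root_.vcDim F ≤ d) (hY : F.Shatters Y) : #Y ≤ d := by
  have hY' : _root_.Shatters F Y := fun T hT => by
    obtain ⟨S, hS, hST⟩ := hY hT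
    exact ⟨S, hS, inter_comm S Y ▸ hST⟩
  have hbdd : BddAbove {m | ∃ Z : Finset α, _root_.Shatters F Z ∧ #Z = m} :=
    ⟨Fintype.card α, by rintro _ ⟨Z, -, rfl⟩; exact card_le_univ Z⟩
  exact (le_csSup hbdd ⟨Y, hY', rfl⟩).trans hF

end

theorem statement0_general (n d : ℕ) (hdn : d < n)
    (A : Finset (Finset (Fin n)))
    (hVC : vcDim (Finset.image₂ (fun S T => symmDiff S T) A A) ≤ d) :
    A.card ≤ 2 ^ (d % 2) * ∑ i ∈ Finset.range (d / 2 + 1), (n - d % 2).choose i := by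
  obtain ⟨B, hcard, hlower, hshatters⟩ := exists_isLowerSet_shatters_image₂_symmDiff A
  rw [← hcard]
  exact card_le_kleitmanBound hdn fun S hS T hT =>
    card_le_of_vcDim_le hVC (hshatters _ (hlower.shatters_union_image₂_symmDiff hS hT))

/-- If `d < n` are positive, `r = d % 2`, and `VC(𝒜 △ 𝒜) ≤ d`, then
`|𝒜| ≤ 2^r · ∑_{i=0}^{⌊d/2⌋} C(n−r, i)`. -/
theorem statement0 (n d : ℕ) (hd : 0 < d) (hdn : d < n)
    (A : Finset (Finset (Fin n)))
    (hVC : vcDim (Finset.image₂ (fun S T => symmDiff S T) A A) ≤ d) :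
    A.card ≤ 2 ^ (d % 2) * ∑ i ∈ Finset.range (d / 2 + 1), (n - d % 2).choose i :=
  statement0_general n d hdn A hVC
end

section
/- Let 𝒜₁, …, 𝒜ₖ be families of subsets of [n] and let i ∈ [n]. Then every set Y ⊆ [n] shattered by 𝒞ᵢ(𝒜₁) △ ⋯ △ 𝒞ᵢ(𝒜ₖ) is also shattered by 𝒜₁ △ ⋯ △ 𝒜ₖ; that is, sh(𝒞ᵢ(𝒜₁) △ ⋯ △ 𝒞ᵢ(𝒜ₖ)) ⊆ sh(𝒜₁ △ ⋯ △ 𝒜ₖ). -/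
section aux

variable {α : Type*} [DecidableEq α]

theorem sdAll_zero (f : Fin 0 → Finset α) : symmDiffAll f = ∅ := rfl

theorem sdAll_succ {k : ℕ} (f : Fin (k+1) → Finset α) :
    symmDiffAll f = symmDiff (f 0) (symmDiffAll fun j => f j.succ) := by
  simp [symmDiffAll, List.ofFn_succ]

theorem sdAll_inter {k : ℕ} (f : Fin k → Finset α) (Y : Finset α) :
    symmDiffAll f ∩ Y = symmDiffAll fun j => f j ∩ Y := by
  induction k with
  | zero => simp [sdAll_zero]
  | succ m ih =>
    rw [sdAll_succ, sdAll_succ (fun j => f j ∩ Y)]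
    rw [← ih]
    ext x
    simp [Finset.mem_symmDiff, Finset.mem_inter]
    tauto

theorem sdAll_erase {k : ℕ} (f : Fin k → Finset α) (i : α) :
    (symmDiffAll f).erase i = symmDiffAll fun j => (f j).erase i := by
  induction k with
  | zero => simp [sdAll_zero]
  | succ m ih =>
    rw [sdAll_succ, sdAll_succ (fun j => (f j).erase i)]
    rw [← ih]
    ext x
    simp [Finset.mem_symmDiff, Finset.mem_erase]
    tauto

theorem sdAll_notMem {k : ℕ} (f : Fin k → Finset α) (i : α) (h : ∀ j, i ∉ f j) :
    i ∉ symmDiffAll f := by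
  induction k with
  | zero => simp [sdAll_zero]
  | succ m ih =>
    rw [sdAll_succ]
    simp only [Finset.mem_symmDiff]
    push_neg
    exact ⟨fun hh => absurd hh (h 0), fun hh => absurd hh (ih _ (fun j => h j.succ))⟩

theorem sdAll_one_diff {k : ℕ} (f g : Fin k → Finset α) (E : Finset α) (j₀ : Fin k)
    (h0 : f j₀ = symmDiff (g j₀) E) (h : ∀ j, j ≠ j₀ → f j = g j) :
    symmDiffAll f = symmDiff (symmDiffAll g) E := by
  induction k with
  | zero => exact j₀.elim0
  | succ m ih =>
    rw [sdAll_succ, sdAll_succ g]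
    rcases Fin.eq_zero_or_eq_succ j₀ with h0' | ⟨j₁, rfl⟩
    · subst h0'
      have : (fun j => f (Fin.succ j)) = fun j => g (Fin.succ j) := by
        funext j; exact h _ (Fin.succ_ne_zero j)
      rw [this, h0, symmDiff_assoc, symmDiff_comm E, ← symmDiff_assoc]
    · have hf0 : f 0 = g 0 := h 0 (by simp [Fin.succ_ne_zero, eq_comm, (Fin.succ_ne_zero j₁).symm])
      rw [hf0, ih (fun j => f j.succ) (fun j => g j.succ) j₁ h0
          (fun j hj => h j.succ (by simpa using hj)), ← symmDiff_assoc]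
end aux

/-- every set shattered by `𝒞ᵢ(𝒜₁) △ ⋯ △ 𝒞ᵢ(𝒜ₖ)` is shattered by
`𝒜₁ △ ⋯ △ 𝒜ₖ`. -/

theorem statement2 (n k : ℕ) (A : Fin k → Finset (Finset (Fin n))) (i : Fin n)
    (Y : Finset (Fin n)) (hY : Shatters (symmDiffFamMulti fun j => compress i (A j)) Y) :
    Shatters (symmDiffFamMulti A) Y := by
  intro T hT
  by_cases hiY : i ∈ Y
  · -- main case: i ∈ Y
    obtain ⟨C, hC, hCY⟩ := hY (insert i T) (Finset.insert_subset hiY hT)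
    rw [symmDiffFamMulti, Finset.mem_image] at hC
    obtain ⟨c, hc, rfl⟩ := hC
    rw [Fintype.mem_piFinset] at hc
    -- preimages
    have key : ∀ j, ∃ s ∈ A j, s.erase i = (c j).erase i := by
      intro j
      obtain ⟨s, hs, heq⟩ := Finset.mem_image.mp (hc j)
      refine ⟨s, hs, ?_⟩
      by_cases hP : s ∈ A j ∧ s.erase i ∈ A j
      · rw [if_pos hP] at heq; rw [heq]
      · rw [if_neg hP] at heq; rw [← heq, Finset.erase_idem]
    choose S hS hSe using key
    -- there is a coordinate containing i
    have hiC : i ∈ symmDiffAll c := by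
      have : i ∈ symmDiffAll c ∩ Y := by rw [hCY]; exact Finset.mem_insert_self i T
      exact (Finset.mem_inter.mp this).1
    obtain ⟨j₀, hj₀⟩ : ∃ j, i ∈ c j := by
      by_contra h
      push_neg at h
      exact sdAll_notMem c i h hiC
    -- flexibility at j₀
    have hflex : c j₀ ∈ A j₀ ∧ (c j₀).erase i ∈ A j₀ := by
      obtain ⟨s, hs, heq⟩ := Finset.mem_image.mp (hc j₀)
      by_cases hP : s ∈ A j₀ ∧ s.erase i ∈ A j₀
      · rw [if_pos hP] at heq; rw [← heq]; exact hP
      · rw [if_neg hP] at heq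
        exact absurd (heq ▸ hj₀) (Finset.notMem_erase i s)
    -- the two candidate witnesses
    set D : Bool → Fin k → Finset (Fin n) :=
      fun b j => if j = j₀ then (if b then c j₀ else (c j₀).erase i) else S j with hD
    have hDmem : ∀ b j, D b j ∈ A j := by
      intro b j
      by_cases hj : j = j₀
      · subst hj; cases b <;> simp [hD, hflex.1, hflex.2]
      · simp [hD, hj, hS j]
    have hDe : ∀ b j, (D b j).erase i = (c j).erase i := by
      intro b j
      by_cases hj : j = j₀
      · subst hj; cases b <;> simp [hD, Finset.erase_idem]
      · simp [hD, hj, hSe j]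
    have hdiff : symmDiffAll (D true) = symmDiff (symmDiffAll (D false)) {i} := by
      refine sdAll_one_diff _ _ {i} j₀ ?_ ?_
      · simp only [hD, if_pos rfl, if_pos, if_neg]
        ext x
        by_cases hx : x = i <;>
          simp [Finset.mem_symmDiff, Finset.mem_erase, hx, hj₀]
      · intro j hj; simp [hD, hj]
    have h1 : ∀ Z : Finset (Fin n), (Z ∩ Y).erase i = Z.erase i ∩ Y := by
      intro Z; ext x; simp only [Finset.mem_erase, Finset.mem_inter] <;> tauto
    have herase : ∀ b, ((symmDiffAll (D b)) ∩ Y).erase i = T.erase i := by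
      intro b
      rw [h1, sdAll_erase, funext (hDe b), ← sdAll_erase, ← h1, hCY,
        Finset.erase_insert_eq_erase]
    -- traces of D true and D false differ exactly at i
    have htr : symmDiffAll (D true) ∩ Y = symmDiff (symmDiffAll (D false) ∩ Y) {i} := by
      rw [hdiff]
      ext x
      by_cases hx : x = i <;>
        simp [Finset.mem_symmDiff, Finset.mem_inter, hx, hiY] <;> tauto
    have hii : (i ∈ symmDiffAll (D true) ∩ Y) ↔ ¬ (i ∈ symmDiffAll (D false) ∩ Y) := by
      rw [htr]; simp [Finset.mem_symmDiff] <;> tauto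
    -- pick the right b
    have : ∃ b, i ∈ symmDiffAll (D b) ∩ Y ↔ i ∈ T := by
      by_cases hib : i ∈ symmDiffAll (D true) ∩ Y
      · by_cases hit : i ∈ T
        · exact ⟨true, by simp [hib, hit]⟩
        · exact ⟨false, by simp [hii.mp hib, hit]⟩
      · by_cases hit : i ∈ T
        · exact ⟨false, by simp [not_not.mp (fun h => hib (hii.mpr h)), hit]⟩
        · exact ⟨true, by simp [hib, hit]⟩
    obtain ⟨b, hb⟩ := this
    refine ⟨symmDiffAll (D b), ?_, ?_⟩
    · rw [symmDiffFamMulti, Finset.mem_image]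
      exact ⟨D b, Fintype.mem_piFinset.mpr (hDmem b), rfl⟩
    · ext x
      by_cases hx : x = i
      · subst hx; simp [hb]
      · constructor
        · intro hxm
          have : x ∈ ((symmDiffAll (D b)) ∩ Y).erase i := Finset.mem_erase.mpr ⟨hx, hxm⟩
          rw [herase b] at this
          exact (Finset.mem_erase.mp this).2
        · intro hxm
          have : x ∈ T.erase i := Finset.mem_erase.mpr ⟨hx, hxm⟩
          rw [← herase b] at this
          exact (Finset.mem_erase.mp this).2
  · -- easy case: i ∉ Y
    obtain ⟨C, hC, hCY⟩ := hY T hT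
    rw [symmDiffFamMulti, Finset.mem_image] at hC
    obtain ⟨c, hc, rfl⟩ := hC
    rw [Fintype.mem_piFinset] at hc
    have key : ∀ j, ∃ s ∈ A j, s ∩ Y = c j ∩ Y := by
      intro j
      obtain ⟨s, hs, heq⟩ := Finset.mem_image.mp (hc j)
      refine ⟨s, hs, ?_⟩
      by_cases hP : s ∈ A j ∧ s.erase i ∈ A j
      · rw [if_pos hP] at heq; rw [heq]
      · rw [if_neg hP] at heq
        rw [← heq]
        ext x
        simp only [Finset.mem_inter, Finset.mem_erase]
        constructor
        · intro ⟨h1, h2⟩; exact ⟨⟨fun hxi => hiY (hxi ▸ h2), h1⟩, h2⟩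
        · intro ⟨⟨_, h1⟩, h2⟩; exact ⟨h1, h2⟩
    choose S hS hSe using key
    refine ⟨symmDiffAll S, ?_, ?_⟩
    · rw [symmDiffFamMulti, Finset.mem_image]
      exact ⟨S, Fintype.mem_piFinset.mpr hS, rfl⟩
    · rw [sdAll_inter, funext hSe, ← sdAll_inter, hCY]
end

section
/- Let 𝒜₁, …, 𝒜ₖ be families of subsets of [n] and let i ∈ [n]. Then VC(𝒞ᵢ(𝒜₁) △ ⋯ △ 𝒞ᵢ(𝒜ₖ)) ≤ VC(𝒜₁ △ ⋯ △ 𝒜ₖ). -/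
lemma mem_symmDiffAll {α : Type*} [DecidableEq α] {k : ℕ} (f : Fin k → Finset α) (a : α) :
    a ∈ symmDiffAll f ↔ Odd ((Finset.univ.filter fun j => a ∈ f j).card) := by
  induction k with
  | zero => simp [symmDiffAll]
  | succ m ih =>
    rw [show (Finset.univ.filter fun j : Fin (m+1) => a ∈ f j).card
        = ∑ j : Fin (m+1), if a ∈ f j then 1 else 0 from by rw [Finset.card_filter]]
    rw [Fin.sum_univ_succ]
    have h2 : symmDiffAll f = symmDiff (f 0) (symmDiffAll fun j : Fin m => f j.succ) := by
      simp [symmDiffAll, List.ofFn_succ]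
    rw [h2, Finset.mem_symmDiff, ih, Finset.card_filter]
    rcases Decidable.em (a ∈ f 0) with h | h <;>
      simp [h, Nat.odd_add, Nat.even_add_one, Nat.not_odd_iff_even, Nat.not_even_iff_odd]

lemma mem_compress' {α : Type*} [DecidableEq α] {i : α} {A : Finset (Finset α)} {C : Finset α}
    (h : C ∈ compress i A) :
    (∃ S ∈ A, S.erase i = C.erase i) ∧ (i ∈ C → C ∈ A ∧ C.erase i ∈ A) := by
  rw [compress, Finset.mem_image] at h
  obtain ⟨S, hS, hSC⟩ := h
  split_ifs at hSC with hc
  · subst hSC; exact ⟨⟨S, hS, rfl⟩, fun _ => hc⟩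
  · subst hSC
    refine ⟨⟨S, hS, by rw [Finset.erase_idem]⟩, fun hi => absurd (Finset.mem_erase.1 hi).1 (by simp)⟩

lemma erase_eq_mem_iff {α : Type*} [DecidableEq α] {i a : α} {S C : Finset α}
    (h : S.erase i = C.erase i) (ha : a ≠ i) : a ∈ S ↔ a ∈ C := by
  constructor <;> intro hm
  · have : a ∈ S.erase i := Finset.mem_erase.2 ⟨ha, hm⟩
    rw [h] at this; exact (Finset.mem_erase.1 this).2
  · have : a ∈ C.erase i := Finset.mem_erase.2 ⟨ha, hm⟩
    rw [← h] at this; exact (Finset.mem_erase.1 this).2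

lemma symmDiffAll_congr_ne {α : Type*} [DecidableEq α] {k : ℕ} {i : α} {f g : Fin k → Finset α}
    (h : ∀ j, (f j).erase i = (g j).erase i) {a : α} (ha : a ≠ i) :
    (a ∈ symmDiffAll f ↔ a ∈ symmDiffAll g) := by
  rw [mem_symmDiffAll, mem_symmDiffAll]
  have : (Finset.univ.filter fun j => a ∈ f j) = (Finset.univ.filter fun j => a ∈ g j) := by
    apply Finset.filter_congr
    intro j _
    simp [erase_eq_mem_iff (h j) ha]
  rw [this]

lemma shatters_compress {α : Type*} [DecidableEq α] {k : ℕ} (A : Fin k → Finset (Finset α))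
    (i : α) (Y : Finset α)
    (h : Shatters (symmDiffFamMulti fun j => compress i (A j)) Y) :
    Shatters (symmDiffFamMulti A) Y := by
  intro T hTY
  by_cases hiY : i ∈ Y
  · -- use witness for insert i T
    obtain ⟨W, hW, hWY⟩ := h (insert i T) (Finset.insert_subset hiY hTY)
    rw [symmDiffFamMulti, Finset.mem_image] at hW
    obtain ⟨C, hCpi, rfl⟩ := hW
    rw [Fintype.mem_piFinset] at hCpi
    have hC := fun j => mem_compress' (hCpi j)
    choose S₀ hS₀A hS₀e using fun j => (hC j).1
    -- i ∈ symmDiffAll C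
    have hiC : i ∈ symmDiffAll C := by
      have : i ∈ symmDiffAll C ∩ Y := by rw [hWY]; exact Finset.mem_insert_self i T
      exact (Finset.mem_inter.1 this).1
    obtain ⟨j₀, hj₀⟩ : ∃ j₀, i ∈ C j₀ := by
      rw [mem_symmDiffAll] at hiC
      obtain ⟨j, hj⟩ := Finset.card_pos.1 hiC.pos
      exact ⟨j, (Finset.mem_filter.1 hj).2⟩
    obtain ⟨hCj₀A, hCj₀eA⟩ := (hC j₀).2 hj₀
    set rest := ((Finset.univ.erase j₀).filter fun j => i ∈ S₀ j) with hrest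
    set S : Fin k → Finset α := fun j =>
      if j = j₀ then (if (i ∈ T ↔ Odd rest.card) then (C j₀).erase i else C j₀) else S₀ j with hSdef
    have hSA : ∀ j, S j ∈ A j := by
      intro j
      by_cases hj : j = j₀
      · subst hj; simp only [hSdef, if_pos rfl]
        split_ifs <;> assumption
      · simp only [hSdef, if_neg hj]; exact hS₀A j
    have hSe : ∀ j, (S j).erase i = (C j).erase i := by
      intro j
      by_cases hj : j = j₀
      · subst hj; simp only [hSdef, if_pos rfl]
        split_ifs with hc
        · rw [Finset.erase_idem]
        · rfl
      · simp only [hSdef, if_neg hj]; exact hS₀e j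
    refine ⟨symmDiffAll S, ?_, ?_⟩
    · rw [symmDiffFamMulti, Finset.mem_image]
      exact ⟨S, Fintype.mem_piFinset.2 hSA, rfl⟩
    · ext a
      rw [Finset.mem_inter]
      by_cases hai : a = i
      · subst hai
        have hiS : a ∈ symmDiffAll S ↔ Odd ((Finset.univ.filter fun j => a ∈ S j).card) :=
          mem_symmDiffAll S a
        have hcard : (Finset.univ.filter fun j => a ∈ S j).card
            = (if a ∈ S j₀ then 1 else 0) + rest.card := by
          rw [Finset.card_filter, Finset.card_filter,
            ← Finset.add_sum_erase Finset.univ _ (Finset.mem_univ j₀)]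
          congr 1
          apply Finset.sum_congr rfl
          intro j hj
          have : j ≠ j₀ := (Finset.mem_erase.1 hj).1
          simp only [hSdef, if_neg this]
        have hij₀ : a ∈ S j₀ ↔ ¬(a ∈ T ↔ Odd rest.card) := by
          simp only [hSdef, if_pos rfl]
          split_ifs with hc
          · simp [hc]
          · simp [hj₀, hc]
        constructor
        · rintro ⟨hs, -⟩
          rw [hiS, hcard] at hs
          by_cases hT : a ∈ T
          · exact hT
          · exfalso
            by_cases ho : Odd rest.card
            · have hmem : a ∈ S j₀ := by rw [hij₀]; simp [hT, ho]
              rw [if_pos hmem, Nat.odd_add] at hs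
              exact (Nat.not_even_iff_odd.mpr ho) (hs.mp (by decide))
            · have hmem : ¬ (a ∈ S j₀) := by rw [hij₀]; simp [hT, ho]
              rw [if_neg hmem, Nat.zero_add] at hs
              exact ho hs
        · intro hT
          refine ⟨?_, hiY⟩
          rw [hiS, hcard]
          by_cases ho : Odd rest.card
          · have hmem : ¬ (a ∈ S j₀) := by rw [hij₀]; simp [hT, ho]
            rw [if_neg hmem]; simpa using ho
          · have hmem : a ∈ S j₀ := by rw [hij₀]; simp [hT, ho]
            rw [if_pos hmem, Nat.odd_add]
            simp [Nat.not_odd_iff_even.mp ho]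
      · have key : a ∈ symmDiffAll S ↔ a ∈ symmDiffAll C := symmDiffAll_congr_ne hSe hai
        constructor
        · rintro ⟨hs, hy⟩
          have : a ∈ symmDiffAll C ∩ Y := Finset.mem_inter.2 ⟨key.1 hs, hy⟩
          rw [hWY] at this
          exact (Finset.mem_insert.1 this).resolve_left hai
        · intro hT
          have haY : a ∈ Y := hTY hT
          have : a ∈ symmDiffAll C ∩ Y := by rw [hWY]; exact Finset.mem_insert_of_mem hT
          exact ⟨key.2 (Finset.mem_inter.1 this).1, haY⟩
  · -- i ∉ Y : easy case
    obtain ⟨W, hW, hWY⟩ := h T hTY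
    rw [symmDiffFamMulti, Finset.mem_image] at hW
    obtain ⟨C, hCpi, rfl⟩ := hW
    rw [Fintype.mem_piFinset] at hCpi
    choose S₀ hS₀A hS₀e using fun j => (mem_compress' (hCpi j)).1
    refine ⟨symmDiffAll S₀, ?_, ?_⟩
    · rw [symmDiffFamMulti, Finset.mem_image]
      exact ⟨S₀, Fintype.mem_piFinset.2 hS₀A, rfl⟩
    · rw [← hWY]
      ext a
      simp only [Finset.mem_inter]
      constructor
      · rintro ⟨hs, hy⟩
        exact ⟨(symmDiffAll_congr_ne hS₀e (fun hai => hiY (hai ▸ hy))).mp hs, hy⟩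
      · rintro ⟨hs, hy⟩
        exact ⟨(symmDiffAll_congr_ne hS₀e (fun hai => hiY (hai ▸ hy))).mpr hs, hy⟩

/-- `VC(𝒞ᵢ(𝒜₁) △ ⋯ △ 𝒞ᵢ(𝒜ₖ)) ≤ VC(𝒜₁ △ ⋯ △ 𝒜ₖ)`. -/
theorem statement3 (n k : ℕ) (A : Fin k → Finset (Finset (Fin n))) (i : Fin n) :
    vcDim (symmDiffFamMulti fun j => compress i (A j)) ≤ vcDim (symmDiffFamMulti A) := by
  have hsub : {m | ∃ Y : Finset (Fin n), Shatters (symmDiffFamMulti fun j => compress i (A j)) Y ∧ Y.card = m}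
      ⊆ {m | ∃ Y : Finset (Fin n), Shatters (symmDiffFamMulti A) Y ∧ Y.card = m} := by
    rintro m ⟨Y, hY, rfl⟩
    exact ⟨Y, shatters_compress A i Y hY, rfl⟩
  rcases Set.eq_empty_or_nonempty
      {m | ∃ Y : Finset (Fin n), Shatters (symmDiffFamMulti fun j => compress i (A j)) Y ∧ Y.card = m}
      with he | hne
  · rw [vcDim, he, csSup_empty]
    exact Nat.zero_le _
  · refine csSup_le_csSup ?_ hne hsub
    refine ⟨n, ?_⟩
    rintro m ⟨Y, -, rfl⟩
    simpa using Finset.card_le_univ Y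
end

section
/- Let i < j be elements of [n]. If 𝒜 is a family of subsets of [n] that is compressed (closed under taking subsets) and k-wise (n−d)-union, then the (i,j)-shift 𝒮ᵢⱼ(𝒜) is also compressed and k-wise (n−d)-union. -/
/-- the `(i,j)`-shift of a compressed `k`-wise `(n−d)`-union family is again
compressed and `k`-wise `(n−d)`-union. -/
theorem statement6 (n k d : ℕ) (i j : Fin n) (hij : i < j)
    (A : Finset (Finset (Fin n)))
    (hcomp : ∀ S ∈ A, ∀ T ⊆ S, T ∈ A)
    (hunion : KwiseUnion k d A) :
    (∀ S ∈ shiftIJ i j A, ∀ T ⊆ S, T ∈ shiftIJ i j A) ∧ KwiseUnion k d (shiftIJ i j A) := by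
  have hne : i ≠ j := ne_of_lt hij
  constructor
  · intro S hS T hT
    rw [shiftIJ, Finset.mem_image] at hS
    obtain ⟨S0, hS0, hS0eq⟩ := hS
    by_cases hc : i ∉ S0 ∧ j ∈ S0 ∧ insert i (S0.erase j) ∉ A
    · rw [if_pos hc] at hS0eq
      subst hS0eq
      have hjS : j ∉ T := by
        intro hj
        rcases Finset.mem_insert.1 (hT hj) with h | h
        · exact hne h.symm
        · exact (Finset.notMem_erase j S0) h
      by_cases hiT : i ∈ T
      · set U := insert j (T.erase i) with hU
        have hUS0 : U ⊆ S0 := by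
          intro x hx
          rcases Finset.mem_insert.1 hx with rfl | hx
          · exact hc.2.1
          · have hx' := Finset.mem_erase.1 hx
            rcases Finset.mem_insert.1 (hT hx'.2) with h | h
            · exact absurd h hx'.1
            · exact Finset.mem_of_mem_erase h
        have hUA : U ∈ A := hcomp S0 hS0 U hUS0
        have himg : insert i (U.erase j) = T := by
          have : U.erase j = T.erase i := by
            rw [hU, Finset.erase_insert]
            intro h
            exact hjS (Finset.mem_of_mem_erase h)
          rw [this, Finset.insert_erase hiT]
        by_cases hTA : T ∈ A
        · refine Finset.mem_image.2 ⟨T, hTA, ?_⟩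
          rw [if_neg]
          intro h
          exact h.1 hiT
        · refine Finset.mem_image.2 ⟨U, hUA, ?_⟩
          rw [if_pos, himg]
          refine ⟨?_, Finset.mem_insert_self _ _, ?_⟩
          · intro h
            rcases Finset.mem_insert.1 h with h | h
            · exact hne h
            · exact (Finset.notMem_erase i T) h
          · rw [himg]; exact hTA
      · have hTS0 : T ⊆ S0 := by
          intro x hx
          rcases Finset.mem_insert.1 (hT hx) with rfl | h
          · exact absurd hx hiT
          · exact Finset.mem_of_mem_erase h
        have hTA : T ∈ A := hcomp S0 hS0 T hTS0
        refine Finset.mem_image.2 ⟨T, hTA, ?_⟩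
        rw [if_neg]
        intro h
        exact hjS h.2.1
    · rw [if_neg hc] at hS0eq
      subst hS0eq
      have hTA : T ∈ A := hcomp S0 hS0 T hT
      by_cases hcT : i ∉ T ∧ j ∈ T ∧ insert i (T.erase j) ∉ A
      · exfalso
        apply hcT.2.2
        push_neg at hc
        by_cases hiS : i ∈ S0
        · refine hcomp S0 hS0 _ ?_
          exact Finset.insert_subset hiS ((Finset.erase_subset _ _).trans hT)
        · have hjS : j ∈ S0 := hT hcT.2.1
          have hmem := hc hiS hjS
          refine hcomp _ hmem _ ?_
          exact Finset.insert_subset_insert _ (Finset.erase_subset_erase _ hT)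
      · exact Finset.mem_image.2 ⟨T, hTA, if_neg hcT⟩
  · intro f hf
    have hex : ∀ t, ∃ S, S ∈ A ∧
        (if i ∉ S ∧ j ∈ S ∧ insert i (S.erase j) ∉ A then insert i (S.erase j) else S) = f t := by
      intro t
      obtain ⟨S, hS, hSeq⟩ := Finset.mem_image.1 (hf t)
      exact ⟨S, hS, hSeq⟩
    choose g hgA hgf using hex
    set P : Fin k → Prop := fun t => i ∉ g t ∧ j ∈ g t ∧ insert i ((g t).erase j) ∉ A with hP
    have hft : ∀ t, f t = if P t then insert i ((g t).erase j) else g t := fun t => (hgf t).symm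
    set V := Finset.univ.sup g with hVdef
    have hVd : V.card ≤ d := hunion g hgA
    have hgV : ∀ t, g t ⊆ V := fun t => Finset.le_sup (Finset.mem_univ t)
    have hfsub : ∀ t, f t ⊆ insert i (g t) := by
      intro t
      rw [hft t]
      split_ifs
      · exact Finset.insert_subset_insert _ (Finset.erase_subset _ _)
      · exact Finset.subset_insert _ _
    by_cases hsh : ∃ t, P t
    · obtain ⟨t₁, hPt₁⟩ := hsh
      have hjV : j ∈ V := hgV t₁ hPt₁.2.1
      by_cases hiV : i ∈ V
      · have hUV : Finset.univ.sup f ⊆ V := by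
          refine Finset.sup_le fun t _ => (hfsub t).trans ?_
          exact Finset.insert_subset hiV (hgV t)
        exact le_trans (Finset.card_le_card hUV) hVd
      · by_cases hjU : j ∈ Finset.univ.sup f
        · obtain ⟨t₀, _, hjt₀⟩ := Finset.mem_sup.1 hjU
          have hPt₀ : ¬ P t₀ := by
            intro hp
            rw [hft t₀, if_pos hp] at hjt₀
            rcases Finset.mem_insert.1 hjt₀ with h | h
            · exact hne h.symm
            · exact (Finset.notMem_erase j _) h
          have hft₀ : f t₀ = g t₀ := by rw [hft t₀, if_neg hPt₀]
          have hjg₀ : j ∈ g t₀ := hft₀ ▸ hjt₀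
          have hig₀ : i ∉ g t₀ := fun h => hiV (hgV t₀ h)
          have hWA : insert i ((g t₀).erase j) ∈ A := by
            by_contra hW
            exact hPt₀ ⟨hig₀, hjg₀, hW⟩
          set W := insert i ((g t₀).erase j) with hWdef
          set h : Fin k → Finset (Fin n) := fun t => if t = t₀ then W else g t with hh
          have hhA : ∀ t, h t ∈ A := by
            intro t
            rw [hh]
            dsimp only
            split_ifs
            · exact hWA
            · exact hgA t
          have ht₁₀ : t₁ ≠ t₀ := fun e => hPt₀ (e ▸ hPt₁)
          have hsubh : Finset.univ.sup f ⊆ Finset.univ.sup h := by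
            intro x hx
            obtain ⟨t, _, hxt⟩ := Finset.mem_sup.1 hx
            rw [hft t] at hxt
            by_cases hp : P t
            · rw [if_pos hp] at hxt
              rcases Finset.mem_insert.1 hxt with rfl | hx'
              · refine Finset.mem_sup.2 ⟨t₀, Finset.mem_univ _, ?_⟩
                have : h t₀ = W := by rw [hh]; simp
                rw [this]
                exact Finset.mem_insert_self _ _
              · have htne : t ≠ t₀ := fun e => hPt₀ (e ▸ hp)
                refine Finset.mem_sup.2 ⟨t, Finset.mem_univ _, ?_⟩
                have : h t = g t := by rw [hh]; simp [htne]
                rw [this]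
                exact Finset.mem_of_mem_erase hx'
            · rw [if_neg hp] at hxt
              by_cases hte : t = t₀
              · subst hte
                by_cases hxj : x = j
                · subst hxj
                  refine Finset.mem_sup.2 ⟨t₁, Finset.mem_univ _, ?_⟩
                  have : h t₁ = g t₁ := by rw [hh]; simp [ht₁₀]
                  rw [this]
                  exact hPt₁.2.1
                · refine Finset.mem_sup.2 ⟨t, Finset.mem_univ _, ?_⟩
                  have : h t = W := by rw [hh]; simp
                  rw [this]
                  exact Finset.mem_insert_of_mem (Finset.mem_erase.2 ⟨hxj, hxt⟩)
              · refine Finset.mem_sup.2 ⟨t, Finset.mem_univ _, ?_⟩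
                have : h t = g t := by rw [hh]; simp [hte]
                rw [this]
                exact hxt
          exact le_trans (Finset.card_le_card hsubh) (hunion h hhA)
        · have hsub : Finset.univ.sup f ⊆ insert i (V.erase j) := by
            intro x hx
            obtain ⟨t, _, hxt⟩ := Finset.mem_sup.1 hx
            rcases Finset.mem_insert.1 (hfsub t hxt) with rfl | hx'
            · exact Finset.mem_insert_self _ _
            · refine Finset.mem_insert_of_mem (Finset.mem_erase.2 ⟨?_, hgV t hx'⟩)
              intro hxj
              exact hjU (hxj ▸ hx)
          have h1 : (Finset.univ.sup f).card ≤ (V.erase j).card + 1 :=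
            le_trans (Finset.card_le_card hsub) (Finset.card_insert_le _ _)
          have h2 : (V.erase j).card = V.card - 1 := Finset.card_erase_of_mem hjV
          have h3 : 0 < V.card := Finset.card_pos.2 ⟨j, hjV⟩
          omega
    · push_neg at hsh
      have : f = g := by
        funext t
        rw [hft t, if_neg (hsh t)]
      rw [this]
      exact hVd
end

section
/- Let n, s, u be nonnegative integers, let B ⊆ [n] with |B| ≥ s, and let 𝒜 be a family of subsets of [n] with |𝒜| > 2^s · Σ_{i=0}^{u} C(n, i). Then there exists A ∈ 𝒜 such that |A ∪ B| ≥ s + u + 1. -/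
open Finset

lemma card_le_two_pow_mul_card_image_sdiff {α : Type*} [DecidableEq α]
    (𝒜 : Finset (Finset α)) (B : Finset α) : #𝒜 ≤ 2 ^ #B * #(𝒜.image (· \ B)) := by
  calc #𝒜 ≤ #(B.powerset ×ˢ 𝒜.image (· \ B)) := by
        refine card_le_card_of_injOn (fun S => (S ∩ B, S \ B)) (fun S hS => ?_) fun S _ S' _ h => ?_
        · exact mem_product.2 ⟨mem_powerset.2 inter_subset_right, mem_image_of_mem _ hS⟩
        · simp only [Prod.mk.injEq] at h
          rw [← sdiff_union_inter S B, ← sdiff_union_inter S' B, h.1, h.2]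
    _ = 2 ^ #B * #(𝒜.image (· \ B)) := by rw [card_product, card_powerset]

lemma card_le_sum_choose_of_forall_card_le {α : Type*} [Fintype α] {𝒞 : Finset (Finset α)}
    {u : ℕ} (h𝒞 : ∀ T ∈ 𝒞, #T ≤ u) :
    #𝒞 ≤ ∑ k ∈ range (u + 1), (Fintype.card α).choose k := by
  classical
  simp_rw [← card_univ, ← card_powersetCard]
  refine (card_le_card fun T hT => mem_biUnion.2 ⟨#T, ?_⟩).trans card_biUnion_le
  exact ⟨mem_range.2 (Nat.lt_succ_of_le (h𝒞 T hT)), mem_powersetCard_univ.2 rfl⟩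

/-- if `|B| ≥ s` and `|𝒜| > 2^s · ∑_{i=0}^{u} C(n,i)`, then some `A ∈ 𝒜`
has `|A ∪ B| ≥ s + u + 1`. -/
theorem statement7 (n s u : ℕ) (B : Finset (Fin n)) (hB : s ≤ B.card)
    (A : Finset (Finset (Fin n)))
    (hA : 2 ^ s * ∑ i ∈ Finset.range (u + 1), n.choose i < A.card) :
    ∃ S ∈ A, s + u + 1 ≤ (S ∪ B).card := by
  obtain ⟨B', hB'B, hB'⟩ := exists_subset_card_eq hB
  by_contra! hsmall
  have hsdiff : ∀ T ∈ A.image (· \ B'), #T ≤ u := forall_mem_image.2 fun S hS => by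
    have hunion := card_sdiff_add_card S B'
    have hmono := card_le_card (union_subset_union_right (s := S) hB'B)
    have := hsmall S hS
    omega
  have hcard := (card_le_two_pow_mul_card_image_sdiff A B').trans
    (Nat.mul_le_mul_left _ (card_le_sum_choose_of_forall_card_le hsdiff))
  rw [hB', Fintype.card_fin] at hcard
  omega
end

section
/- Let k, d be positive integers with k dividing d and set t = d/k. There exists n₀ = n₀(d,k) such that for every n ≥ n₀, every k-wise (n−d)-union family 𝒜 of subsets of [n] satisfies |𝒜| ≤ Σ_{i=0}^{t} C(n, i). -/
/-!
Write `d = k t` and induct on `k`. If `𝒜` is `k`-wise `(n - k t)`-union we are done by induction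
(for `k = 1` every member has at most `t` elements). Otherwise some `k` members have a union `W`
with `k t < |W|`; adding any `S ∈ 𝒜` to them gives `|S ∪ W| ≤ (k + 1) t`, so `|W| ≤ (k + 1) t` and
`|S \ W| < t`. Recording `S` by the pair `(S ∩ W, S \ W)` bounds `|𝒜|` by
`2^((k+1)t) · C(n, ≤ t - 1)`, which is at most `C(n, t)` once `n` is large.
-/

open Finset

lemma Nat.choose_le_choose_of_le_of_le_half {n i j : ℕ} (hij : i ≤ j) (hj : j ≤ n / 2) :
    n.choose i ≤ n.choose j := by
  induction j, hij using Nat.le_induction with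
  | base => rfl
  | succ j _ ih => exact (ih (by omega)).trans (Nat.choose_le_succ_of_lt_half_left (by omega))

lemma Nat.mul_sum_range_choose_le_choose {n c t : ℕ} (hn : c * t * t + 2 * t ≤ n) :
    c * ∑ i ∈ range t, n.choose i ≤ n.choose t := by
  rcases t with _ | s
  · simp
  have hsum : ∑ i ∈ range (s + 1), n.choose i ≤ (s + 1) * n.choose s := by
    simpa using sum_le_card_nsmul (range (s + 1)) n.choose (n.choose s) fun i hi =>
      Nat.choose_le_choose_of_le_of_le_half (Nat.lt_succ_iff.1 (mem_range.1 hi)) (by omega)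
  have hgap : c * (s + 1) * (s + 1) ≤ n - s := by omega
  refine Nat.le_of_mul_le_mul_right ?_ s.succ_pos
  calc (c * ∑ i ∈ range (s + 1), n.choose i) * (s + 1)
      ≤ c * ((s + 1) * n.choose s) * (s + 1) := by gcongr
    _ = n.choose s * (c * (s + 1) * (s + 1)) := by ring
    _ ≤ n.choose s * (n - s) := by gcongr
    _ = n.choose (s + 1) * (s + 1) := (Nat.choose_succ_right_eq n s).symm

section Counting

variable {α : Type*} [Fintype α] [DecidableEq α]

lemma card_le_sum_range_choose {A : Finset (Finset α)} {m : ℕ} (h : ∀ S ∈ A, #S < m) :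
    #A ≤ ∑ i ∈ range m, (Fintype.card α).choose i := by
  have hA : A ⊆ (range m).biUnion fun i => powersetCard i univ := fun S hS =>
    mem_biUnion.2 ⟨#S, mem_range.2 (h S hS), mem_powersetCard.2 ⟨subset_univ S, rfl⟩⟩
  calc #A ≤ _ := card_le_card hA
    _ ≤ _ := card_biUnion_le
    _ = _ := by simp only [card_powersetCard, card_univ]

lemma card_le_two_pow_mul_of_card_sdiff_lt {A : Finset (Finset α)} (W : Finset α) {m : ℕ}
    (h : ∀ S ∈ A, #(S \ W) < m) :
    #A ≤ 2 ^ #W * ∑ i ∈ range m, (Fintype.card α).choose i := by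
  have hinj : #A ≤ #(W.powerset ×ˢ A.image (· \ W)) := by
    refine card_le_card_of_injOn (fun S => (S ∩ W, S \ W)) (fun S hS => ?_) fun S₁ _ S₂ _ h => ?_
    · simp only [coe_product, Set.mem_prod, mem_coe, mem_powerset]
      exact ⟨inter_subset_right, mem_image_of_mem _ hS⟩
    · obtain ⟨hinter, hsdiff⟩ := Prod.mk.inj h
      rw [← sdiff_union_inter S₁ W, ← sdiff_union_inter S₂ W, hinter, hsdiff]
  calc #A ≤ 2 ^ #W * #(A.image (· \ W)) := by rwa [card_product, card_powerset] at hinj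
    _ ≤ _ := by
      gcongr
      exact card_le_sum_range_choose <| by simpa using h

end Counting

section KwiseUnion

variable {α : Type*} [DecidableEq α] {A : Finset (Finset α)} {S : Finset α} {k d : ℕ}

lemma KwiseUnion.card_le (hk : 0 < k) (hA : KwiseUnion k d A) (hS : S ∈ A) : #S ≤ d := by
  have := hA (fun _ => S) fun _ => hS
  rwa [sup_const (univ_nonempty_iff.2 ⟨⟨0, hk⟩⟩)] at this

lemma KwiseUnion.card_union_sup_le (hA : KwiseUnion (k + 1) d A) (hS : S ∈ A)
    {f : Fin k → Finset α} (hf : ∀ i, f i ∈ A) : #(S ∪ univ.sup f) ≤ d := by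
  have := hA (Fin.cons S f) fun i => Fin.cases hS hf i
  rwa [Fin.univ_succ, sup_cons, sup_map] at this

lemma KwiseUnion.card_le_choose [Fintype α] {t : ℕ} (hA : KwiseUnion (k + 1) ((k + 1) * t) A)
    {f : Fin k → Finset α} (hf : ∀ i, f i ∈ A) (hW : k * t < #(univ.sup f))
    (hn : 2 ^ ((k + 1) * t) * t * t + 2 * t ≤ Fintype.card α) :
    #A ≤ (Fintype.card α).choose t := by
  set W := univ.sup f
  obtain rfl | ⟨S₀, hS₀⟩ := A.eq_empty_or_nonempty
  · simp
  have hWle : #W ≤ (k + 1) * t :=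
    (card_le_card subset_union_right).trans (hA.card_union_sup_le hS₀ hf)
  have hsdiff : ∀ S ∈ A, #(S \ W) < t := by
    intro S hS
    have := hA.card_union_sup_le hS hf
    rw [← card_sdiff_add_card] at this
    linarith
  calc #A ≤ 2 ^ #W * ∑ i ∈ range t, (Fintype.card α).choose i :=
        card_le_two_pow_mul_of_card_sdiff_lt W hsdiff
    _ ≤ 2 ^ ((k + 1) * t) * ∑ i ∈ range t, (Fintype.card α).choose i := by
        gcongr
        norm_num
    _ ≤ _ := Nat.mul_sum_range_choose_le_choose hn

end KwiseUnion

theorem exists_card_le_of_kwiseUnion_mul (t : ℕ) {k : ℕ} (hk : 0 < k) :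
    ∃ n₀ : ℕ, ∀ n : ℕ, n₀ ≤ n → ∀ A : Finset (Finset (Fin n)),
      KwiseUnion k (k * t) A → #A ≤ ∑ i ∈ range (t + 1), n.choose i := by
  induction k, hk using Nat.le_induction with
  | base =>
    refine ⟨0, fun n _ A hA => ?_⟩
    simpa using card_le_sum_range_choose fun S hS =>
      Nat.lt_succ_of_le <| (hA.card_le one_pos hS).trans_eq (one_mul t)
  | succ k _ ih =>
    obtain ⟨n₁, hn₁⟩ := ih
    refine ⟨max n₁ (2 ^ ((k + 1) * t) * t * t + 2 * t), fun n hn A hA => ?_⟩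
    by_cases hA' : KwiseUnion k (k * t) A
    · exact hn₁ n (le_of_max_le_left hn) A hA'
    simp only [KwiseUnion, not_forall, not_le] at hA'
    obtain ⟨f, hf, hW⟩ := hA'
    calc #A ≤ n.choose t := by
          simpa using hA.card_le_choose hf hW (by simpa using le_of_max_le_right hn)
      _ ≤ _ := single_le_sum (fun i _ => Nat.zero_le _) (self_mem_range_succ t)

theorem statement8_general (k d : ℕ) (hk : 0 < k) (hkd : k ∣ d) :
    ∃ n₀ : ℕ, ∀ n : ℕ, n₀ ≤ n → ∀ A : Finset (Finset (Fin n)),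
      KwiseUnion k d A → A.card ≤ ∑ i ∈ Finset.range (d / k + 1), n.choose i := by
  obtain ⟨t, rfl⟩ := hkd
  rw [Nat.mul_div_cancel_left t hk]
  exact exists_card_le_of_kwiseUnion_mul t hk

/-- for `k ∣ d`, `t = d/k`, there is `n₀(d,k)` such that for `n ≥ n₀` every
`k`-wise `(n−d)`-union family on `[n]` has size at most `∑_{i=0}^{t} C(n,i)`. -/
theorem statement8 (k d : ℕ) (hk : 0 < k) (hd : 0 < d) (hkd : k ∣ d) :
    ∃ n₀ : ℕ, ∀ n : ℕ, n₀ ≤ n → ∀ A : Finset (Finset (Fin n)),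
      KwiseUnion k d A → A.card ≤ ∑ i ∈ Finset.range (d / k + 1), n.choose i :=
  statement8_general k d hk hkd
end

section
/- Let k, d be positive integers and write d ≡ r (mod k) with 0 ≤ r ≤ k−1. There exists n₀ = n₀(d,k) such that for every n ≥ n₀, any k-wise (n−d)-union family 𝒜 of subsets of [n] with |𝒜| = 2^r · Σ_{i=0}^{⌊d/k⌋} C(n−r, i) equals, up to a permutation of the ground set [n], the family 𝒜_{r,⌊d/k⌋} = {S ⊆ [n] : |S ∩ [n−r]| ≤ ⌊d/k⌋}. -/
/-!
Write `i = ⌊d/k⌋` and `r = d mod k`. Greedily picking at most `k - 1` members of `𝒜`, each adding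
`i + 1` new points, gives a kernel `W` with `|W| ≤ (k - 1) d` and `|S \ W| ≤ i` for every `S ∈ 𝒜`.
Call a trace `Z ⊆ W` rich if for every set `X` of bounded size some member with trace `Z` has `i`
points outside `X`. Members over any `k` rich traces (repetitions allowed) can then be chosen so
that each has `i` points outside `W` and the others, so the `k`-wise union condition forces the
union `R` of all rich traces to satisfy `|R| ≤ r` and `|S \ R| + |R| ≤ i + r` for every `S ∈ 𝒜`.
A fibre over a non-rich trace has `O(n^(i-1))` members and one over a rich trace at most
`∑_{j ≤ i} C(n, j)`, so the extremal size of `𝒜` forces `|R| = r`. Hence `𝒜 ⊆ {S : |S \ R| ≤ i}`,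
a family of exactly that size.
-/

open Finset

theorem Nat.choose_succ_le_choose_sub_add (n r j : ℕ) :
    n.choose (j + 1) ≤ (n - r).choose (j + 1) + r * n.choose j := by
  induction r with
  | zero => simp
  | succ r ih =>
    have pascal : (n - r).choose (j + 1) ≤ (n - (r + 1)).choose (j + 1) + n.choose j := by
      rcases h : n - r with _ | a
      · simp
      · rw [show n - (r + 1) = a by omega, Nat.choose_succ_succ', add_comm]
        exact Nat.add_le_add_left (Nat.choose_le_choose j (by omega)) _
    rw [add_one_mul]
    omega

theorem sum_range_succ_choose_le_add (n r i : ℕ) :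
    ∑ j ∈ range (i + 1), n.choose j ≤
      ∑ j ∈ range (i + 1), (n - r).choose j + r * ∑ j ∈ range i, n.choose j := by
  simp only [sum_range_succ', Nat.choose_zero_right, mul_sum]
  have := sum_le_sum fun j (_ : j ∈ range i) => Nat.choose_succ_le_choose_sub_add n r j
  rw [sum_add_distrib] at this
  omega

theorem eventually_mul_sum_range_choose_lt_choose (c r i : ℕ) :
    ∀ᶠ n in Filter.atTop, c * ∑ j ∈ range i, n.choose j < (n - r).choose i := by
  rcases i with _ | i
  · simp
  set F := 2 ^ (i + 1) * (i + 1).factorial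
  filter_upwards [Filter.eventually_ge_atTop (2 * (r + i) + c * (i + 1) * F + 1)] with n hn
  have hsum : ∑ j ∈ range (i + 1), n.choose j ≤ (i + 1) * n ^ i := by
    simpa using sum_le_card_nsmul (range (i + 1)) _ (n ^ i) fun j hj =>
      (Nat.choose_le_pow n j).trans
        (Nat.pow_le_pow_right (by omega) (Nat.lt_succ_iff.1 (mem_range.1 hj)))
  have hdesc : (n - r - i) ^ (i + 1) ≤ (i + 1).factorial * (n - r).choose (i + 1) := by
    rw [← Nat.descFactorial_eq_factorial_mul_choose]
    simpa [show n - r + 1 - (i + 1) = n - r - i by omega] using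
      Nat.pow_sub_le_descFactorial (n - r) (i + 1)
  have hhalf : n ^ (i + 1) ≤ 2 ^ (i + 1) * (n - r - i) ^ (i + 1) := by
    rw [← mul_pow]
    exact Nat.pow_le_pow_left (by omega) _
  refine Nat.lt_of_mul_lt_mul_right (a := F) ?_
  calc (c * ∑ j ∈ range (i + 1), n.choose j) * F
      ≤ (c * ((i + 1) * n ^ i)) * F := by gcongr
    _ = (c * (i + 1) * F) * n ^ i := by ring
    _ < n * n ^ i := Nat.mul_lt_mul_of_pos_right (by omega) (pow_pos (by omega) _)
    _ = n ^ (i + 1) := (pow_succ' n i).symm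
    _ ≤ 2 ^ (i + 1) * ((i + 1).factorial * (n - r).choose (i + 1)) :=
        hhalf.trans (Nat.mul_le_mul_left _ hdesc)
    _ = (n - r).choose (i + 1) * F := by ring

theorem eventually_sum_range_succ_choose_add_lt (c r i : ℕ) :
    ∀ᶠ n in Filter.atTop, ∑ j ∈ range (i + 1), n.choose j + c * ∑ j ∈ range i, n.choose j <
      2 * ∑ j ∈ range (i + 1), (n - r).choose j := by
  filter_upwards [eventually_mul_sum_range_choose_lt_choose (c + r) r i] with n hn
  have hshift := sum_range_succ_choose_le_add n r i
  have hlead : (n - r).choose i ≤ ∑ j ∈ range (i + 1), (n - r).choose j :=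
    single_le_sum (fun j _ => Nat.zero_le _) (self_mem_range_succ i)
  rw [add_mul] at hn
  omega

theorem two_pow_lt_two_mul_of_le_mul_add {a z P Q P' C C' r : ℕ} (ha : a = 2 ^ r * P')
    (hle : a ≤ z * P + C * Q) (hC : C ≤ C') (hlt : P + 2 * C' * Q < 2 * P') :
    2 ^ r < 2 * z := by
  by_contra! h
  have h2r : 0 < 2 ^ r := Nat.two_pow_pos r
  refine lt_irrefl (2 * a) ?_
  calc 2 * a ≤ 2 * z * P + 2 * C * Q := by rw [mul_assoc, mul_assoc]; omega
    _ ≤ 2 ^ r * P + 2 ^ r * (2 * C' * Q) :=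
        add_le_add (Nat.mul_le_mul_right P h) <|
          (Nat.mul_le_mul_right Q (Nat.mul_le_mul_left 2 hC)).trans (Nat.le_mul_of_pos_left _ h2r)
    _ < 2 ^ r * (2 * P') := by
        rw [← mul_add]
        exact Nat.mul_lt_mul_of_pos_left hlt h2r
    _ = 2 * a := by rw [ha]; ring

theorem Fin.univ_sup_cons {β : Type*} [SemilatticeSup β] [OrderBot β] {m : ℕ} (a : β)
    (f : Fin m → β) : univ.sup (Fin.cons a f : Fin (m + 1) → β) = a ⊔ univ.sup f := by
  simp [Fin.univ_succ]

section

variable {α : Type*}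

theorem card_powerset_filter_card_lt (s : Finset α) (m : ℕ) :
    #{t ∈ s.powerset | #t < m} = ∑ j ∈ range m, (#s).choose j := by
  rw [card_eq_sum_card_fiberwise (f := card) (t := range m) (fun t ht => by simp_all)]
  refine sum_congr rfl fun j hj => ?_
  rw [← card_powersetCard, powersetCard_eq_filter, filter_filter]
  congr 1
  ext t
  simp only [mem_filter, mem_range] at hj ⊢
  constructor <;> rintro ⟨h1, h2⟩ <;> simp_all

variable [DecidableEq α] {A : Finset (Finset α)} {W : Finset α} {b d i k : ℕ}

theorem card_le_card_image_inter_mul [Fintype α] {B : Finset (Finset α)} {X : Finset α} {m : ℕ}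
    (hB : ∀ S ∈ B, #(S \ X) < m) :
    #B ≤ #(B.image (· ∩ X)) * ∑ j ∈ range m, (Fintype.card α).choose j := by
  rw [← card_univ, ← card_powerset_filter_card_lt, ← card_product]
  refine card_le_card_of_injOn (fun S => (S ∩ X, S \ X)) (fun S hS => ?_) fun S _ S' _ h => ?_
  · simp only [coe_product, Set.mem_prod, mem_coe, mem_image, mem_filter, mem_powerset]
    exact ⟨⟨S, hS, rfl⟩, subset_univ _, hB S hS⟩
  · simp only [Prod.mk.injEq] at h
    rw [← sdiff_union_inter S X, ← sdiff_union_inter S' X, h.1, h.2]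

theorem card_filter_card_sdiff_le [Fintype α] (R : Finset α) (i : ℕ) :
    #{S : Finset α | #(S \ R) ≤ i} =
      2 ^ #R * ∑ j ∈ range (i + 1), (Fintype.card α - #R).choose j := by
  have split : ∀ P T : Finset α, P ⊆ R → T ⊆ Rᶜ → (P ∪ T) ∩ R = P ∧ (P ∪ T) \ R = T := by
    intro P T hP hT
    rw [subset_compl_iff_disjoint_right] at hT
    rw [union_inter_distrib_right, inter_eq_left.2 hP, disjoint_iff_inter_eq_empty.1 hT,
      union_empty, union_sdiff_distrib, sdiff_eq_empty_iff_subset.2 hP, empty_union,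
      hT.sdiff_eq_left]
    exact ⟨rfl, rfl⟩
  rw [← card_powerset R, ← card_compl, ← card_powerset_filter_card_lt, ← card_product]
  refine card_nbij' (fun S => (S ∩ R, S \ R)) (fun p => p.1 ∪ p.2) ?_ ?_ ?_ ?_
  · intro S hS
    simp_all [sdiff_eq_inter_compl]
  · rintro ⟨P, T⟩ h
    simp only [coe_product, Set.mem_prod, mem_coe, mem_powerset, mem_filter] at h
    simpa [(split P T h.1 h.2.1).2, Nat.lt_succ_iff] using h.2.2
  · intro S _
    exact (union_comm _ _).trans (sdiff_union_inter S R)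
  · rintro ⟨P, T⟩ h
    simp only [coe_product, Set.mem_prod, mem_coe, mem_powerset, mem_filter] at h
    simp only [split P T h.1 h.2.1]

theorem image_filter_card_sdiff_le [Fintype α] (σ : Equiv.Perm α) (R : Finset α) (i : ℕ) :
    ({S | #(S \ R) ≤ i} : Finset (Finset α)).image (·.image σ) =
      ({S | #(S \ R.image σ) ≤ i} : Finset (Finset α)) := by
  ext T
  simp only [mem_image, mem_filter_univ]
  constructor
  · rintro ⟨S, hS, rfl⟩
    rwa [← image_sdiff _ _ σ.injective, card_image_of_injective _ σ.injective]
  · intro hT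
    refine ⟨T.image σ.symm, ?_, by simp [image_image]⟩
    calc #(T.image σ.symm \ R) = #((T \ R.image σ).image σ.symm) := by
          rw [image_sdiff _ _ σ.symm.injective, image_image]; simp
      _ ≤ i := card_image_le.trans hT

theorem card_univ_sup_le_mul {m : ℕ} {f : Fin m → Finset α} (hf : ∀ t, #(f t) ≤ d) :
    #(univ.sup f) ≤ m * d := by
  simpa [sup_eq_biUnion] using card_biUnion_le_card_mul univ f d fun t _ => hf t

theorem KwiseUnion.card_le_of_mem (hA : KwiseUnion (k + 1) d A) {S : Finset α} (hS : S ∈ A) :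
    #S ≤ d := by
  simpa [sup_const univ_nonempty] using hA (fun _ => S) fun _ => hS

theorem KwiseUnion.exists_kernel (hA : KwiseUnion (k + 1) d A) :
    ∃ W : Finset α, #W ≤ k * d ∧ ∀ S ∈ A, #(S \ W) ≤ d / (k + 1) := by
  by_contra! hW
  have grow : ∀ ℓ ≤ k + 1, ∃ f : Fin ℓ → Finset α,
      (∀ t, f t ∈ A) ∧ ℓ * (d / (k + 1) + 1) ≤ #(univ.sup f) := by
    intro ℓ
    induction ℓ with
    | zero => exact fun _ => ⟨Fin.elim0, fun t => t.elim0, by simp⟩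
    | succ ℓ ih =>
      intro hℓ
      obtain ⟨f, hfA, hf⟩ := ih (by omega)
      obtain ⟨S, hSA, hS⟩ := hW (univ.sup f) <|
        (card_univ_sup_le_mul fun t => hA.card_le_of_mem (hfA t)).trans
          (Nat.mul_le_mul_right d (by omega))
      refine ⟨Fin.cons S f, Fin.cases hSA hfA, ?_⟩
      rw [Fin.univ_sup_cons, sup_eq_union, ← card_sdiff_add_card, add_one_mul]
      omega
  obtain ⟨f, hfA, hf⟩ := grow (k + 1) le_rfl
  have := hA f hfA
  have : d < (k + 1) * (d / (k + 1) + 1) := Nat.lt_mul_div_succ d k.succ_pos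
  omega

def RichTrace (A : Finset (Finset α)) (W : Finset α) (b i : ℕ) (Z : Finset α) : Prop :=
  ∀ X : Finset α, #X ≤ b → ∃ S ∈ A, S ∩ W = Z ∧ i ≤ #(S \ X)

open scoped Classical in
noncomputable def richTraces (A : Finset (Finset α)) (W : Finset α) (b i : ℕ) :
    Finset (Finset α) :=
  {Z ∈ W.powerset | RichTrace A W b i Z}

theorem mem_richTraces {Z : Finset α} :
    Z ∈ richTraces A W b i ↔ Z ⊆ W ∧ RichTrace A W b i Z := by
  simp [richTraces]

theorem exists_tuple_of_richTrace (hA : ∀ S ∈ A, #S ≤ d) :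
    ∀ {m : ℕ} (g : Fin m → Finset α), (∀ t, RichTrace A W b i (g t)) →
      ∀ X : Finset α, #X + m * d ≤ b → ∃ f : Fin m → Finset α,
        (∀ t, f t ∈ A) ∧ univ.sup f ∩ W = univ.sup g ∧ m * i ≤ #(univ.sup f \ X)
  | 0, g, _, X, _ => ⟨Fin.elim0, fun t => t.elim0, by simp, by simp⟩
  | m + 1, g, hg, X, hX => by
    obtain ⟨S, hSA, hSW, hSX⟩ := hg 0 X (by rw [add_one_mul] at hX; omega)
    -- the later members must also avoid `S`, which costs at most `d` of the budget
    obtain ⟨f, hfA, hfW, hfX⟩ := exists_tuple_of_richTrace hA (Fin.tail g) (fun t => hg t.succ)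
      (X ∪ S) (by have := card_union_le X S; have := hA S hSA; rw [add_one_mul] at hX; omega)
    refine ⟨Fin.cons S f, Fin.cases hSA hfA, ?_, ?_⟩
    · rw [← Fin.cons_self_tail g, Fin.univ_sup_cons, Fin.univ_sup_cons, sup_eq_union,
        union_inter_distrib_right, hSW, hfW, sup_eq_union]
    · have hsplit : (S ∪ univ.sup f) \ X = S \ X ∪ univ.sup f \ (X ∪ S) := by
        ext x
        simp only [mem_sdiff, mem_union]
        tauto
      have hdisj : Disjoint (S \ X) (univ.sup f \ (X ∪ S)) :=
        disjoint_left.2 fun x hx hx' => (mem_sdiff.1 hx').2 (mem_union_right X (mem_sdiff.1 hx).1)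
      rw [Fin.univ_sup_cons, sup_eq_union, hsplit, card_union_of_disjoint hdisj, add_one_mul]
      omega

theorem KwiseUnion.card_sup_add_mul_le (hA : KwiseUnion (k + 1) d A)
    {g : Fin (k + 1) → Finset α} (hg : ∀ t, RichTrace A W b i (g t))
    (hb : #W + (k + 1) * d ≤ b) :
    #(univ.sup g) + (k + 1) * i ≤ d := by
  obtain ⟨f, hfA, hfW, hfX⟩ := exists_tuple_of_richTrace (fun S => hA.card_le_of_mem) g hg W hb
  have := card_inter_add_card_sdiff (univ.sup f) W
  have := hA f hfA
  rw [hfW] at *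
  omega

theorem KwiseUnion.card_add_card_sup_sdiff_add_mul_le (hA : KwiseUnion (k + 1) d A)
    {g : Fin k → Finset α} (hg : ∀ t, RichTrace A W b i (g t)) {S : Finset α} (hS : S ∈ A)
    (hb : #(W ∪ S) + k * d ≤ b) :
    #S + #(univ.sup g \ S) + k * i ≤ d := by
  obtain ⟨f, hfA, hfW, hfX⟩ :=
    exists_tuple_of_richTrace (fun S => hA.card_le_of_mem) g hg (W ∪ S) hb
  have hunion := hA (Fin.cons S f) (Fin.cases hS hfA)
  rw [Fin.univ_sup_cons, sup_eq_union, union_comm, ← card_sdiff_add_card,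
    ← card_inter_add_card_sdiff (univ.sup f \ S) W, sdiff_inter_right_comm, hfW, sdiff_sdiff_left,
    sup_eq_union, union_comm S W] at hunion
  omega

theorem exists_tuple_subset_univ_sup {𝒵 : Finset (Finset α)} (h𝒵 : 𝒵.Nonempty) {T : Finset α}
    (hT : T ⊆ 𝒵.sup id) {m : ℕ} (hm : #T ≤ m) :
    ∃ g : Fin m → Finset α, (∀ t, g t ∈ 𝒵) ∧ T ⊆ univ.sup g := by
  induction T using Finset.induction_on generalizing m with
  | empty =>
    obtain ⟨Z, hZ⟩ := h𝒵
    exact ⟨fun _ => Z, fun _ => hZ, empty_subset _⟩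
  | insert x T hx ih =>
    rw [card_insert_of_notMem hx] at hm
    obtain ⟨m, rfl⟩ : ∃ m', m = m' + 1 := ⟨m - 1, by omega⟩
    obtain ⟨Z, hZ, hxZ⟩ := mem_sup.1 (hT (mem_insert_self x T))
    obtain ⟨g, hg, hTg⟩ := ih ((subset_insert x T).trans hT) (m := m) (by omega)
    refine ⟨Fin.cons Z g, Fin.cases hZ hg, ?_⟩
    rw [Fin.univ_sup_cons, sup_eq_union]
    exact insert_subset (mem_union_left _ hxZ) (hTg.trans subset_union_right)

theorem KwiseUnion.card_sup_richTraces_le {r : ℕ} (hA : KwiseUnion (k + 1) d A)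
    (hb : #W + (k + 1) * d ≤ b) (hd : (k + 1) * i + r = d) (hr : r ≤ k)
    (hne : (richTraces A W b i).Nonempty) :
    #((richTraces A W b i).sup id) ≤ r := by
  by_contra! hR
  obtain ⟨T, hTR, hT⟩ := exists_subset_card_eq (s := (richTraces A W b i).sup id) hR
  obtain ⟨g, hg, hTg⟩ := exists_tuple_subset_univ_sup hne hTR (m := k + 1) (by omega)
  have := hA.card_sup_add_mul_le (fun t => (mem_richTraces.1 (hg t)).2) hb
  have := card_le_card hTg
  omega

theorem KwiseUnion.card_sdiff_sup_richTraces_add_card_le {r : ℕ} (hA : KwiseUnion (k + 1) d A)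
    (hb : #W + (k + 1) * d ≤ b) (hd : (k + 1) * i + r = d) (hr : r ≤ k)
    (hne : (richTraces A W b i).Nonempty) {S : Finset α} (hS : S ∈ A) :
    #(S \ (richTraces A W b i).sup id) + #((richTraces A W b i).sup id) ≤ i + r := by
  set R := (richTraces A W b i).sup id
  have hRr : #R ≤ r := hA.card_sup_richTraces_le hb hd hr hne
  obtain ⟨g, hg, hRg⟩ := exists_tuple_subset_univ_sup hne (sdiff_subset (s := R) (t := S))
    (m := k) ((card_le_card sdiff_subset).trans (hRr.trans hr))
  have := hA.card_add_card_sup_sdiff_add_mul_le (fun t => (mem_richTraces.1 (hg t)).2) hS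
    (by have := card_union_le W S; have := hA.card_le_of_mem hS; rw [add_one_mul] at hb; omega)
  have := card_le_card (subset_sdiff.2 ⟨hRg, sdiff_disjoint⟩)
  have := card_inter_add_card_sdiff S R
  have := card_inter_add_card_sdiff R S
  rw [inter_comm] at this
  rw [add_one_mul] at hd
  omega

theorem card_le_card_richTraces_mul_add [Fintype α] (hW : ∀ S ∈ A, #(S \ W) ≤ i) :
    #A ≤ #(richTraces A W b i) * ∑ j ∈ range (i + 1), (Fintype.card α).choose j +
      2 ^ (#W + b) * ∑ j ∈ range i, (Fintype.card α).choose j := by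
  set N := Fintype.card α
  have rich_fiber_le : ∀ Z, #{S ∈ A | S ∩ W = Z} ≤ ∑ j ∈ range (i + 1), N.choose j := by
    intro Z
    calc _ ≤ #({S ∈ A | S ∩ W = Z}.image (· ∩ W)) * ∑ j ∈ range (i + 1), N.choose j :=
          card_le_card_image_inter_mul fun S hS => Nat.lt_succ_of_le (hW S (mem_filter.1 hS).1)
      _ ≤ #{Z} * ∑ j ∈ range (i + 1), N.choose j :=
          Nat.mul_le_mul_right _ <| card_le_card <| image_subset_iff.2 fun S hS =>
            mem_singleton.2 (mem_filter.1 hS).2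
      _ = _ := by rw [card_singleton, one_mul]
  have poor_fiber_le : ∀ Z ∉ richTraces A W b i, Z ⊆ W →
      #{S ∈ A | S ∩ W = Z} ≤ 2 ^ b * ∑ j ∈ range i, N.choose j := by
    intro Z hZ hZW
    obtain ⟨X, hXb, hX⟩ : ∃ X : Finset α, #X ≤ b ∧ ∀ S ∈ A, S ∩ W = Z → #(S \ X) < i := by
      simpa [mem_richTraces, hZW, RichTrace] using hZ
    refine (card_le_card_image_inter_mul (X := X) fun S hS =>
      hX S (mem_filter.1 hS).1 (mem_filter.1 hS).2).trans (Nat.mul_le_mul_right _ ?_)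
    calc #(image (· ∩ X) {S ∈ A | S ∩ W = Z}) ≤ #X.powerset :=
          card_le_card (image_subset_iff.2 fun S _ => mem_powerset.2 inter_subset_right)
      _ ≤ 2 ^ b := by rw [card_powerset]; exact Nat.pow_le_pow_right two_pos hXb
  rw [card_eq_sum_card_fiberwise (f := (· ∩ W)) (t := W.powerset)
      fun S _ => mem_powerset.2 inter_subset_right,
    ← sum_filter_add_sum_filter_not W.powerset (· ∈ richTraces A W b i)]
  refine add_le_add ?_ ?_
  · refine (sum_le_card_nsmul _ _ _ fun Z _ => rich_fiber_le Z).trans ?_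
    rw [smul_eq_mul]
    exact Nat.mul_le_mul_right _ (card_le_card fun Z hZ => (mem_filter.1 hZ).2)
  · refine (sum_le_card_nsmul _ _ _ fun Z hZ =>
      poor_fiber_le Z (mem_filter.1 hZ).2 (mem_powerset.1 (mem_filter.1 hZ).1)).trans ?_
    rw [smul_eq_mul, pow_add, mul_assoc]
    exact Nat.mul_le_mul_right _ ((card_filter_le _ _).trans (card_powerset W).le)

theorem KwiseUnion.eq_filter_card_sdiff_le [Fintype α] (hA : KwiseUnion (k + 1) d A)
    (hn : ∑ j ∈ range (d / (k + 1) + 1), (Fintype.card α).choose j +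
        2 * 2 ^ ((3 * k + 1) * d) * ∑ j ∈ range (d / (k + 1)), (Fintype.card α).choose j <
      2 * ∑ j ∈ range (d / (k + 1) + 1), (Fintype.card α - d % (k + 1)).choose j)
    (hcard : #A = 2 ^ (d % (k + 1)) *
      ∑ j ∈ range (d / (k + 1) + 1), (Fintype.card α - d % (k + 1)).choose j) :
    ∃ R : Finset α, #R = d % (k + 1) ∧
      A = ({S | #(S \ R) ≤ d / (k + 1)} : Finset (Finset α)) := by
  set i := d / (k + 1)
  set r := d % (k + 1)
  set P := ∑ j ∈ range (i + 1), (Fintype.card α).choose j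
  set Q := ∑ j ∈ range i, (Fintype.card α).choose j
  have hd : (k + 1) * i + r = d := Nat.div_add_mod d (k + 1)
  have hr : r ≤ k := Nat.le_of_lt_succ (Nat.mod_lt d k.succ_pos)
  obtain ⟨W, hWcard, hW⟩ := hA.exists_kernel
  set b := #W + (k + 1) * d
  set 𝒵 := richTraces A W b i
  set R := 𝒵.sup id
  have hcount : #A ≤ #𝒵 * P + 2 ^ (#W + b) * Q := card_le_card_richTraces_mul_add hW
  have hpow : 2 ^ (#W + b) ≤ 2 ^ ((3 * k + 1) * d) := Nat.pow_le_pow_right two_pos <| by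
    simp only [b]
    rw [add_mul, add_mul, one_mul, mul_assoc]
    omega
  have hmany : 2 ^ r < 2 * #𝒵 := two_pow_lt_two_mul_of_le_mul_add hcard hcount hpow hn
  have hne : 𝒵.Nonempty := card_pos.1 (by have := Nat.one_le_two_pow (n := r); omega)
  have hRr : #R = r := by
    refine le_antisymm (hA.card_sup_richTraces_le le_rfl hd hr hne) ?_
    have : #𝒵 ≤ 2 ^ #R :=
      (card_le_card fun Z hZ => mem_powerset.2 (le_sup (f := id) hZ)).trans_eq (card_powerset R)
    have : 2 ^ r < 2 ^ (#R + 1) := by rw [pow_succ]; omega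
    exact Nat.lt_succ_iff.1 ((Nat.pow_lt_pow_iff_right (by norm_num)).1 this)
  refine ⟨R, hRr, eq_of_subset_of_card_le (fun S hS => mem_filter.2 ⟨mem_univ S, ?_⟩) ?_⟩
  · have : #(S \ R) + #R ≤ i + r :=
      hA.card_sdiff_sup_richTraces_add_card_le le_rfl hd hr hne hS
    omega
  · rw [card_filter_card_sdiff_le, hRr, hcard]

end

theorem statement11_general (k d : ℕ) (hk : 0 < k) :
    ∃ n₀ : ℕ, ∀ n : ℕ, n₀ ≤ n → ∀ A : Finset (Finset (Fin n)),
      KwiseUnion k d A →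
      A.card = 2 ^ (d % k) * ∑ i ∈ Finset.range (d / k + 1), (n - d % k).choose i →
      ∃ σ : Equiv.Perm (Fin n),
        A.image (fun S => S.image σ) =
          Finset.univ.filter
            (fun S : Finset (Fin n) =>
              (S.filter fun x : Fin n => (x : ℕ) < n - d % k).card ≤ d / k) := by
  obtain ⟨k, rfl⟩ := Nat.exists_eq_add_one.2 hk
  obtain ⟨n₀, hn₀⟩ := Filter.eventually_atTop.1 <| eventually_sum_range_succ_choose_add_lt
    (2 * 2 ^ ((3 * k + 1) * d)) (d % (k + 1)) (d / (k + 1))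
  refine ⟨n₀, fun n hn A hA hcard => ?_⟩
  obtain ⟨R, hR, rfl⟩ :=
    hA.eq_filter_card_sdiff_le (by simpa using hn₀ n hn) (by simpa using hcard)
  set L : Finset (Fin n) := {x | ↑x < n - d % (k + 1)}
  obtain ⟨σ, hσ⟩ := Equiv.Perm.exists_map_finset_eq R Lᶜ <| by
    have := hR ▸ card_le_univ R
    rw [card_compl, Fin.card_filter_val_lt, Fintype.card_fin] at *
    omega
  refine ⟨σ, ?_⟩
  rw [image_filter_card_sdiff_le, ← Equiv.coe_toEmbedding, ← map_eq_image, hσ]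
  ext S
  simp only [mem_filter, mem_univ, true_and, sdiff_compl, inf_eq_inter, L, inter_filter,
    inter_univ]

/-- for positive `k, d` with `r = d % k`, there is `n₀(d,k)` such that for
`n ≥ n₀` any `k`-wise `(n−d)`-union family on `[n]` of size `2^r · ∑_{i=0}^{⌊d/k⌋} C(n−r,i)`
equals, up to a permutation of `[n]`, the family `𝒜_{r,⌊d/k⌋} = {S : |S ∩ [n−r]| ≤ ⌊d/k⌋}`. -/
theorem statement11 (k d : ℕ) (hk : 0 < k) (hd : 0 < d) :
    ∃ n₀ : ℕ, ∀ n : ℕ, n₀ ≤ n → ∀ A : Finset (Finset (Fin n)),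
      KwiseUnion k d A →
      A.card = 2 ^ (d % k) * ∑ i ∈ Finset.range (d / k + 1), (n - d % k).choose i →
      ∃ σ : Equiv.Perm (Fin n),
        A.image (fun S => S.image σ) =
          Finset.univ.filter
            (fun S : Finset (Fin n) =>
              (S.filter fun x : Fin n => (x : ℕ) < n - d % k).card ≤ d / k) :=
  statement11_general k d hk
end
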